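/- arXiv:2502.13815 — 16 statements merged into one kernel-verified Lean document; each statement's English description precedes it below -/
import Mathlib

section
/- For all integers i, j, ℓ ≥ 0 the following three identities hold: (1) 𝒫_{i+j}·𝒫_{i+ℓ} − 𝒫_i·𝒫_{i+j+ℓ} = (s⁶−s³)^i·𝒫_j·𝒫_ℓ; (2) 𝒫_{i+j}·𝒬_{i+ℓ} − 𝒫_i·𝒬_{i+j+ℓ} = (s⁶−s³)^i·𝒫_j·𝒬_ℓ; (3) 𝒫_{i+j}·ℛ_{i+ℓ} − 𝒫_i·ℛ_{i+j+ℓ} = (s⁶−s³)^i·𝒫_j·ℛ_ℓ. -/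
/-- Lemma 2.6 ("Lemma `lem:PQ:identities`"): the three product identities for the
polynomial sequences `𝒫`, `𝒬`, `ℛ` evaluated at an element `s` of a field of
characteristic 3. -/
theorem stmt_0 {K : Type*} [Field K] [CharP K 3]
    (s : K) (hs0 : s ≠ 0) (hs1 : s ≠ 1)
    (P Q R : ℕ → K)
    (hP0 : P 0 = 0) (hP1 : P 1 = 1)
    (hQ0 : Q 0 = (s * (s - 1))⁻¹) (hQ1 : Q 1 = s)
    (hR0 : R 0 = -(s ^ 2)⁻¹) (hR1 : R 1 = -(s + 1))
    (hPrec : ∀ j : ℕ, 1 ≤ j → P (j + 1) = -s ^ 3 * P j - (s * (s - 1)) ^ 3 * P (j - 1))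
    (hQrec : ∀ j : ℕ, 1 ≤ j → Q (j + 1) = -s ^ 3 * Q j - (s * (s - 1)) ^ 3 * Q (j - 1))
    (hRrec : ∀ j : ℕ, 1 ≤ j → R (j + 1) = -s ^ 3 * R j - (s * (s - 1)) ^ 3 * R (j - 1)) :
    ∀ i j ℓ : ℕ,
      P (i + j) * P (i + ℓ) - P i * P (i + j + ℓ) = (s ^ 6 - s ^ 3) ^ i * P j * P ℓ ∧
      P (i + j) * Q (i + ℓ) - P i * Q (i + j + ℓ) = (s ^ 6 - s ^ 3) ^ i * P j * Q ℓ ∧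
      P (i + j) * R (i + ℓ) - P i * R (i + j + ℓ) = (s ^ 6 - s ^ 3) ^ i * P j * R ℓ := by
  have h3 : (3 : K) = 0 := CharP.cast_eq_zero K 3
  have hb : s ^ 6 - s ^ 3 = (s * (s - 1)) ^ 3 := by
    linear_combination (s ^ 5 - s ^ 4) * h3
  -- Addition formula for any sequence satisfying the recursion.
  have addF : ∀ X : ℕ → K,
      (∀ j : ℕ, 1 ≤ j → X (j + 1) = -s ^ 3 * X j - (s * (s - 1)) ^ 3 * X (j - 1)) →
      ∀ n m : ℕ,
        X (m + n + 1) = P (n + 1) * X (m + 1) - (s * (s - 1)) ^ 3 * P n * X m := by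
    intro X hXrec n
    induction n using Nat.strong_induction_on with
    | _ n ih =>
      match n with
      | 0 => intro m; simp [hP0, hP1]
      | 1 =>
        intro m
        have hX := hXrec (m + 1) (by omega)
        simp only [Nat.add_sub_cancel] at hX
        have hP2 := hPrec 1 le_rfl
        simp only [Nat.sub_self, hP0] at hP2
        rw [show m + 1 + 1 = m + 1 + 1 from rfl, hX, hP2, hP1]
        ring
      | (n + 2) =>
        intro m
        have h1 := ih (n + 1) (by omega) m
        rw [show m + (n + 1) + 1 = m + n + 2 by omega,
            show n + 1 + 1 = n + 2 by omega] at h1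
        have h0 := ih n (by omega) m
        have hX := hXrec (m + n + 2) (by omega)
        rw [show m + n + 2 - 1 = m + n + 1 by omega] at hX
        have hP3 := hPrec (n + 2) (by omega)
        rw [show n + 2 - 1 = n + 1 by omega] at hP3
        have hP2 := hPrec (n + 1) (by omega)
        rw [show n + 1 + 1 = n + 2 by omega, show n + 1 - 1 = n by omega] at hP2
        rw [show m + (n + 2) + 1 = m + n + 2 + 1 by omega]
        linear_combination hX + (-s ^ 3) * h1 - (s * (s - 1)) ^ 3 * h0
          - X (m + 1) * hP3 + (s * (s - 1)) ^ 3 * X m * hP2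
  have key : ∀ X : ℕ → K,
      (∀ j : ℕ, 1 ≤ j → X (j + 1) = -s ^ 3 * X j - (s * (s - 1)) ^ 3 * X (j - 1)) →
      ∀ i j ℓ : ℕ,
        P (i + j) * X (i + ℓ) - P i * X (i + j + ℓ) = (s ^ 6 - s ^ 3) ^ i * P j * X ℓ := by
    intro X hXrec
    -- Cassini-like identity
    have G : ∀ i ℓ : ℕ,
        P (i + 1) * X (i + ℓ) - P i * X (i + ℓ + 1) = ((s * (s - 1)) ^ 3) ^ i * X ℓ := by
      intro i
      induction i with
      | zero => intro ℓ; simp [hP0, hP1]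
      | succ i ih =>
        intro ℓ
        have hP2 := hPrec (i + 1) (by omega)
        rw [show i + 1 - 1 = i by omega] at hP2
        have hX := hXrec (i + ℓ + 1) (by omega)
        rw [show i + ℓ + 1 - 1 = i + ℓ by omega] at hX
        rw [show i + 1 + ℓ = i + ℓ + 1 by omega]
        have := ih ℓ
        linear_combination X (i + ℓ + 1) * hP2 - P (i + 1) * hX
          + (s * (s - 1)) ^ 3 * this
    intro i j ℓ
    match j with
    | 0 => simp [hP0]
    | (n + 1) =>
      have hPadd := addF P hPrec n i
      have hXadd := addF X hXrec n (i + ℓ)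
      have hG := G i ℓ
      rw [show i + (n + 1) + ℓ = i + ℓ + n + 1 by omega,
          show i + (n + 1) = i + n + 1 by omega, hb]
      linear_combination X (i + ℓ) * hPadd - P i * hXadd + P (n + 1) * hG
  intro i j ℓ
  exact ⟨key P hPrec i j ℓ, key Q hQrec i j ℓ, key R hRrec i j ℓ⟩
end

section
/- For every integer i ≥ 1 one has 𝒫_{i+1}·𝒬_i − 𝒫_i·𝒬_{i+1} = s^{3i−1}·(s−1)^{3i−1} and 𝒫_{i+1}·ℛ_i − 𝒫_i·ℛ_{i+1} = −s^{3i−2}·(s−1)^{3i}. Consequently, for every integer i ≥ 0 it is not the case that 𝒫_i = 0 and 𝒬_i = 0 simultaneously, and it is not the case that 𝒫_i = 0 and ℛ_i = 0 simultaneously. -/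
theorem stmt_2 {K : Type*} [Field K] [CharP K 3]
    (s : K) (hs0 : s ≠ 0) (hs1 : s ≠ 1)
    (P Q R : ℕ → K)
    (hP0 : P 0 = 0) (hP1 : P 1 = 1)
    (hQ0 : Q 0 = (s * (s - 1))⁻¹) (hQ1 : Q 1 = s)
    (hR0 : R 0 = -(s ^ 2)⁻¹) (hR1 : R 1 = -(s + 1))
    (hPrec : ∀ j : ℕ, 1 ≤ j → P (j + 1) = -s ^ 3 * P j - (s * (s - 1)) ^ 3 * P (j - 1))
    (hQrec : ∀ j : ℕ, 1 ≤ j → Q (j + 1) = -s ^ 3 * Q j - (s * (s - 1)) ^ 3 * Q (j - 1))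
    (hRrec : ∀ j : ℕ, 1 ≤ j → R (j + 1) = -s ^ 3 * R j - (s * (s - 1)) ^ 3 * R (j - 1)) :
    (∀ i : ℕ, 1 ≤ i →
      P (i + 1) * Q i - P i * Q (i + 1) = s ^ (3 * i - 1) * (s - 1) ^ (3 * i - 1) ∧
      P (i + 1) * R i - P i * R (i + 1) = -(s ^ (3 * i - 2) * (s - 1) ^ (3 * i))) ∧
    (∀ i : ℕ, ¬(P i = 0 ∧ Q i = 0) ∧ ¬(P i = 0 ∧ R i = 0)) := by
  have hs1' : s - 1 ≠ 0 := sub_ne_zero.mpr hs1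
  have key : ∀ i : ℕ, 1 ≤ i →
      P (i + 1) * Q i - P i * Q (i + 1) = s ^ (3 * i - 1) * (s - 1) ^ (3 * i - 1) ∧
      P (i + 1) * R i - P i * R (i + 1) = -(s ^ (3 * i - 2) * (s - 1) ^ (3 * i)) := by
    intro i hi
    induction i, hi using Nat.le_induction with
    | base =>
      have hP2 := hPrec 1 le_rfl
      have hQ2 := hQrec 1 le_rfl
      have hR2 := hRrec 1 le_rfl
      simp only [Nat.sub_self] at hP2 hQ2 hR2
      norm_num [hP2, hQ2, hR2, hP0, hP1, hQ0, hQ1, hR0, hR1]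
      constructor
      · field_simp
      · field_simp
    | succ i hi ih =>
      obtain ⟨ihQ, ihR⟩ := ih
      have hP2 := hPrec (i + 1) (by omega)
      have hQ2 := hQrec (i + 1) (by omega)
      have hR2 := hRrec (i + 1) (by omega)
      simp only [Nat.add_sub_cancel] at hP2 hQ2 hR2
      have e1 : 3 * (i + 1) - 1 = (3 * i - 1) + 3 := by omega
      have e2 : 3 * (i + 1) - 2 = (3 * i - 2) + 3 := by omega
      have e3 : 3 * (i + 1) = 3 * i + 3 := by omega
      constructor
      · rw [hP2, hQ2, e1, pow_add, pow_add]
        linear_combination (s * (s - 1)) ^ 3 * ihQ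
      · rw [hP2, hR2, e2, e3, pow_add, pow_add]
        linear_combination (s * (s - 1)) ^ 3 * ihR
  refine ⟨key, ?_⟩
  intro i
  match i with
  | 0 =>
    constructor
    · rintro ⟨-, hq⟩
      rw [hQ0, inv_eq_zero] at hq
      exact (mul_ne_zero hs0 hs1') hq
    · rintro ⟨-, hr⟩
      rw [hR0, neg_eq_zero, inv_eq_zero] at hr
      exact (pow_ne_zero 2 hs0) hr
  | Nat.succ n =>
    obtain ⟨hQw, hRw⟩ := key (n + 1) (by omega)
    constructor
    · rintro ⟨hp, hq⟩
      rw [hp, hq, mul_zero, zero_mul, sub_zero] at hQw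
      exact (mul_ne_zero (pow_ne_zero _ hs0) (pow_ne_zero _ hs1')) hQw.symm
    · rintro ⟨hp, hr⟩
      rw [hp, hr, mul_zero, zero_mul, sub_zero] at hRw
      rw [eq_comm, neg_eq_zero] at hRw
      exact (mul_ne_zero (pow_ne_zero _ hs0) (pow_ne_zero _ hs1')) hRw
end

section
/- Suppose r ∈ K satisfies r² = s. Then for every integer i ≥ 0: 𝒫_i = (−(s³+s·r)^i + (s³−s·r)^i)/(s·r), 𝒬_i = ((r−1)·(s³+s·r)^i − (r+1)·(s³−s·r)^i)/(s(s−1)), and ℛ_i = ((r+1)·(s³+s·r)^i − (r−1)·(s³−s·r)^i)/s². -/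
theorem stmt_3 {K : Type*} [Field K] [CharP K 3]
    (s : K) (hs0 : s ≠ 0) (hs1 : s ≠ 1)
    (P Q R : ℕ → K)
    (hP0 : P 0 = 0) (hP1 : P 1 = 1)
    (hQ0 : Q 0 = (s * (s - 1))⁻¹) (hQ1 : Q 1 = s)
    (hR0 : R 0 = -(s ^ 2)⁻¹) (hR1 : R 1 = -(s + 1))
    (hPrec : ∀ j : ℕ, 1 ≤ j → P (j + 1) = -s ^ 3 * P j - (s * (s - 1)) ^ 3 * P (j - 1))
    (hQrec : ∀ j : ℕ, 1 ≤ j → Q (j + 1) = -s ^ 3 * Q j - (s * (s - 1)) ^ 3 * Q (j - 1))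
    (hRrec : ∀ j : ℕ, 1 ≤ j → R (j + 1) = -s ^ 3 * R j - (s * (s - 1)) ^ 3 * R (j - 1))
    (r : K) (hr : r ^ 2 = s) :
    ∀ i : ℕ,
      P i = (-(s ^ 3 + s * r) ^ i + (s ^ 3 - s * r) ^ i) / (s * r) ∧
      Q i = ((r - 1) * (s ^ 3 + s * r) ^ i - (r + 1) * (s ^ 3 - s * r) ^ i) / (s * (s - 1)) ∧
      R i = ((r + 1) * (s ^ 3 + s * r) ^ i - (r - 1) * (s ^ 3 - s * r) ^ i) / s ^ 2 := by
  have h3 : (3 : K) = 0 := by exact_mod_cast CharP.cast_eq_zero K 3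
  have hr0 : r ≠ 0 := by
    intro h; apply hs0; rw [← hr, h]; ring
  have hsr : s * r ≠ 0 := mul_ne_zero hs0 hr0
  have hs1' : s - 1 ≠ 0 := sub_ne_zero.mpr hs1
  have hss1 : s * (s - 1) ≠ 0 := mul_ne_zero hs0 hs1'
  have hs2 : s ^ 2 ≠ 0 := pow_ne_zero 2 hs0
  set α := s ^ 3 + s * r with hαdef
  set β := s ^ 3 - s * r with hβdef
  have hα : α ^ 2 = -s ^ 3 * α - (s * (s - 1)) ^ 3 := by
    rw [hαdef]
    linear_combination s ^ 2 * hr + (s ^ 6 + s ^ 4 * r - s ^ 5 + s ^ 4) * h3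
  have hβ : β ^ 2 = -s ^ 3 * β - (s * (s - 1)) ^ 3 := by
    rw [hβdef]
    linear_combination s ^ 2 * hr + (s ^ 6 - s ^ 4 * r - s ^ 5 + s ^ 4) * h3
  have key : ∀ (a b d : K), d ≠ 0 → ∀ j : ℕ,
      -s ^ 3 * ((a * α ^ (j + 1) + b * β ^ (j + 1)) / d)
        - (s * (s - 1)) ^ 3 * ((a * α ^ j + b * β ^ j) / d)
      = (a * α ^ (j + 2) + b * β ^ (j + 2)) / d := by
    intro a b d hd j
    have hnum : a * α ^ (j + 2) + b * β ^ (j + 2)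
        = -s ^ 3 * (a * α ^ (j + 1) + b * β ^ (j + 1))
          - (s * (s - 1)) ^ 3 * (a * α ^ j + b * β ^ j) := by
      linear_combination a * α ^ j * hα + b * β ^ j * hβ
    rw [hnum]; ring
  suffices h : ∀ i : ℕ,
      (P i = (-α ^ i + β ^ i) / (s * r) ∧
       Q i = ((r - 1) * α ^ i - (r + 1) * β ^ i) / (s * (s - 1)) ∧
       R i = ((r + 1) * α ^ i - (r - 1) * β ^ i) / s ^ 2) ∧
      (P (i + 1) = (-α ^ (i + 1) + β ^ (i + 1)) / (s * r) ∧
       Q (i + 1) = ((r - 1) * α ^ (i + 1) - (r + 1) * β ^ (i + 1)) / (s * (s - 1)) ∧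
       R (i + 1) = ((r + 1) * α ^ (i + 1) - (r - 1) * β ^ (i + 1)) / s ^ 2) by
    exact fun i => (h i).1
  intro i
  induction i with
  | zero =>
    refine ⟨⟨?_, ?_, ?_⟩, ?_, ?_, ?_⟩
    · simp [hP0]
    · rw [hQ0]; field_simp; linear_combination h3
    · rw [hR0]; field_simp; linear_combination -h3
    · rw [hP1, hαdef, hβdef]; field_simp; linear_combination s * r * h3
    · rw [hQ1, hαdef, hβdef]; field_simp
      linear_combination (-2 * s) * hr + (s ^ 3 - s ^ 2) * h3
    · rw [hR1, hαdef, hβdef]; field_simp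
      linear_combination (-2 * s) * hr + (-s ^ 3 - s ^ 2) * h3
  | succ n ih =>
    obtain ⟨h1, h2P, h2Q, h2R⟩ := ih
    refine ⟨⟨h2P, h2Q, h2R⟩, ?_, ?_, ?_⟩
    · have := hPrec (n + 1) (by omega)
      simp only [Nat.add_sub_cancel] at this
      rw [this, h2P, h1.1]
      linear_combination key (-1) 1 (s * r) hsr n
    · have := hQrec (n + 1) (by omega)
      simp only [Nat.add_sub_cancel] at this
      rw [this, h2Q, h1.2.1]
      linear_combination key (r - 1) (-(r + 1)) (s * (s - 1)) hss1 n
    · have := hRrec (n + 1) (by omega)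
      simp only [Nat.add_sub_cancel] at this
      rw [this, h2R, h1.2.2]
      linear_combination key (r + 1) (-(r - 1)) (s ^ 2) hs2 n
end

section
/- For every integer i ≥ 1 one has ℛ_i = ℛ_{i−1}·s·(s−1)² + 𝒫_i/s. -/
theorem eq_zero_of_linearRec_of_initial_eq_zero {R : Type*} [NonUnitalNonAssocSemiring R]
    (a b : R) (x : ℕ → R) (h0 : x 0 = 0) (h1 : x 1 = 0)
    (hrec : ∀ n, x (n + 2) = a * x (n + 1) + b * x n) (n : ℕ) : x n = 0 := by
  induction n using Nat.twoStepInduction with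
  | zero => exact h0
  | one => exact h1
  | more n ih₀ ih₁ => rw [hrec, ih₀, ih₁, mul_zero, mul_zero, add_zero]

theorem linearRec_of_forall_one_le {K : Type*} [Ring K] (a b : K) (X : ℕ → K)
    (h : ∀ j : ℕ, 1 ≤ j → X (j + 1) = -a * X j - b * X (j - 1)) (n : ℕ) :
    X (n + 2) = -a * X (n + 1) + -b * X n := by
  rw [h (n + 1) (by omega), Nat.add_sub_cancel]
  noncomm_ring

theorem stmt_4_general {K : Type*} [Field K] [CharP K 3]
    (s : K) (hs0 : s ≠ 0)
    (P R : ℕ → K)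
    (hP0 : P 0 = 0) (hP1 : P 1 = 1)
    (hR0 : R 0 = -(s ^ 2)⁻¹) (hR1 : R 1 = -(s + 1))
    (hPrec : ∀ j : ℕ, 1 ≤ j → P (j + 1) = -s ^ 3 * P j - (s * (s - 1)) ^ 3 * P (j - 1))
    (hRrec : ∀ j : ℕ, 1 ≤ j → R (j + 1) = -s ^ 3 * R j - (s * (s - 1)) ^ 3 * R (j - 1)) :
    ∀ i : ℕ, 1 ≤ i → R i = R (i - 1) * s * (s - 1) ^ 2 + P i / s := by
  have h3 : (3 : K) = 0 := CharP.cast_eq_zero K 3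
  have hP := linearRec_of_forall_one_le _ _ P hPrec
  have hR := linearRec_of_forall_one_le _ _ R hRrec
  -- the defect of the claimed identity is a linear combination of solutions of the same recursion
  set D : ℕ → K := fun n => R (n + 1) - R n * s * (s - 1) ^ 2 - P (n + 1) / s with hD
  have hD0 : D 0 = 0 := by
    simp only [hD, zero_add, hR0, hR1, hP1]
    field_simp
    linear_combination (-s) * h3
  have hD1 : D 1 = 0 := by
    simp only [hD, hR 0, hP 0, hR0, hR1, hP0, hP1]
    field_simp
    linear_combination (s ^ 2 - s ^ 3 + s ^ 4) * h3
  have hDrec : ∀ n, D (n + 2) = -s ^ 3 * D (n + 1) + -(s * (s - 1)) ^ 3 * D n := by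
    intro n
    simp only [hD]
    linear_combination hR (n + 1) - hP (n + 1) / s - s * (s - 1) ^ 2 * hR n
  intro i hi
  obtain ⟨n, rfl⟩ : ∃ n, i = n + 1 := ⟨i - 1, by omega⟩
  have := eq_zero_of_linearRec_of_initial_eq_zero _ _ D hD0 hD1 hDrec n
  simp only [hD, Nat.add_sub_cancel] at this ⊢
  linear_combination this

theorem stmt_4 {K : Type*} [Field K] [CharP K 3]
    (s : K) (hs0 : s ≠ 0) (hs1 : s ≠ 1)
    (P Q R : ℕ → K)
    (hP0 : P 0 = 0) (hP1 : P 1 = 1)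
    (hQ0 : Q 0 = (s * (s - 1))⁻¹) (hQ1 : Q 1 = s)
    (hR0 : R 0 = -(s ^ 2)⁻¹) (hR1 : R 1 = -(s + 1))
    (hPrec : ∀ j : ℕ, 1 ≤ j → P (j + 1) = -s ^ 3 * P j - (s * (s - 1)) ^ 3 * P (j - 1))
    (hQrec : ∀ j : ℕ, 1 ≤ j → Q (j + 1) = -s ^ 3 * Q j - (s * (s - 1)) ^ 3 * Q (j - 1))
    (hRrec : ∀ j : ℕ, 1 ≤ j → R (j + 1) = -s ^ 3 * R j - (s * (s - 1)) ^ 3 * R (j - 1)) :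
    ∀ i : ℕ, 1 ≤ i → R i = R (i - 1) * s * (s - 1) ^ 2 + P i / s :=
  stmt_4_general s hs0 P R hP0 hP1 hR0 hR1 hPrec hRrec
end

section
/- Suppose r ∈ K satisfies r² = s, and set γ = (r+1)/(r−1). Then for every integer n ≥ 0: 𝒫_n = 0 if and only if γ^n = 1. In particular, the smallest positive integer i with 𝒫_{i+1} = 0 (when it exists) satisfies i ≥ 2, and equals one less than the multiplicative order of γ. -/
theorem stmt_5 {K : Type*} [Field K] [CharP K 3]
    (s : K) (hs0 : s ≠ 0) (hs1 : s ≠ 1)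
    (P Q R : ℕ → K)
    (hP0 : P 0 = 0) (hP1 : P 1 = 1)
    (hQ0 : Q 0 = (s * (s - 1))⁻¹) (hQ1 : Q 1 = s)
    (hR0 : R 0 = -(s ^ 2)⁻¹) (hR1 : R 1 = -(s + 1))
    (hPrec : ∀ j : ℕ, 1 ≤ j → P (j + 1) = -s ^ 3 * P j - (s * (s - 1)) ^ 3 * P (j - 1))
    (hQrec : ∀ j : ℕ, 1 ≤ j → Q (j + 1) = -s ^ 3 * Q j - (s * (s - 1)) ^ 3 * Q (j - 1))
    (hRrec : ∀ j : ℕ, 1 ≤ j → R (j + 1) = -s ^ 3 * R j - (s * (s - 1)) ^ 3 * R (j - 1))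
    (r : K) (hr : r ^ 2 = s) :
    (∀ n : ℕ, P n = 0 ↔ ((r + 1) / (r - 1)) ^ n = 1) ∧
    (∀ i : ℕ, 0 < i → P (i + 1) = 0 → (∀ j : ℕ, 0 < j → j < i → P (j + 1) ≠ 0) →
      2 ≤ i ∧ i + 1 = orderOf ((r + 1) / (r - 1))) := by
  subst hr
  have h3 : (3 : K) = 0 := by exact_mod_cast CharP.cast_eq_zero K 3
  have hr0 : r ≠ 0 := by
    rintro rfl; exact hs0 (by ring)
  have hrm : r - 1 ≠ 0 := by
    intro h
    apply hs1
    have : r = 1 := by linear_combination h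
    rw [this]; ring
  have hrp : r + 1 ≠ 0 := by
    intro h
    apply hs1
    have : r = -1 := by linear_combination h
    rw [this]; ring
  set g : K := (r + 1) / (r - 1) with hg
  set a : K := (r ^ 2 - r) ^ 3 with ha
  set b : K := (r ^ 2 + r) ^ 3 with hb
  have hab : a + b = -(r ^ 2) ^ 3 := by
    rw [ha, hb]; linear_combination (r ^ 6 + 2 * r ^ 4) * h3
  have hprod : a * b = (r ^ 2 * (r ^ 2 - 1)) ^ 3 := by
    rw [ha, hb]; ring
  have ha0 : a ≠ 0 := by
    rw [ha]
    apply pow_ne_zero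
    intro h
    have : r * (r - 1) = 0 := by linear_combination h
    rcases mul_eq_zero.mp this with h' | h'
    · exact hr0 h'
    · exact hrm h'
  have hb0 : b ≠ 0 := by
    rw [hb]
    apply pow_ne_zero
    intro h
    have : r * (r + 1) = 0 := by linear_combination h
    rcases mul_eq_zero.mp this with h' | h'
    · exact hr0 h'
    · exact hrp h'
  have key : ∀ n, r ^ 3 * P n = a ^ n - b ^ n := by
    have K2 : ∀ n, r ^ 3 * P n = a ^ n - b ^ n ∧
        r ^ 3 * P (n + 1) = a ^ (n + 1) - b ^ (n + 1) := by
      intro n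
      induction n with
      | zero =>
        constructor
        · simp [hP0]
        · rw [hP1, pow_one, pow_one, ha, hb]
          linear_combination (2 * r ^ 5 + r ^ 3) * h3
      | succ n ih =>
        refine ⟨ih.2, ?_⟩
        have hrec := hPrec (n + 1) (Nat.le_add_left 1 n)
        simp only [Nat.add_sub_cancel] at hrec
        rw [hrec]
        linear_combination (-(r ^ 2) ^ 3) * ih.2 - (r ^ 2 * (r ^ 2 - 1)) ^ 3 * ih.1 +
          (b ^ (n + 1) - a ^ (n + 1)) * hab + (a ^ n - b ^ n) * hprod
    exact fun n => (K2 n).1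
  have hx3 : ∀ x : K, x ^ 3 = 1 ↔ x = 1 := by
    intro x
    constructor
    · intro h
      have h' : (x - 1) ^ 3 = 0 := by linear_combination h + (x - x ^ 2) * h3
      have := pow_eq_zero_iff (n := 3) (by norm_num) |>.mp h'
      linear_combination this
    · rintro rfl; simp
  have hba : b = a * g ^ 3 := by
    rw [ha, hb, hg]
    field_simp
  have main : ∀ n : ℕ, a ^ n = b ^ n ↔ g ^ n = 1 := by
    intro n
    have hbn : b ^ n = a ^ n * (g ^ n) ^ 3 := by
      rw [hba, mul_pow]
      congr 1
      rw [← pow_mul, ← pow_mul, Nat.mul_comm]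
    constructor
    · intro h
      apply (hx3 _).mp
      have h' : a ^ n * 1 = a ^ n * (g ^ n) ^ 3 := by rw [mul_one, ← hbn]; exact h
      exact (mul_left_cancel₀ (pow_ne_zero n ha0) h').symm
    · intro h
      rw [hbn, h, one_pow, mul_one]
  have hr3 : r ^ 3 ≠ 0 := pow_ne_zero _ hr0
  have hiff : ∀ n, P n = 0 ↔ g ^ n = 1 := by
    intro n
    constructor
    · intro h
      apply (main n).mp
      have hk := key n
      rw [h, mul_zero] at hk
      exact sub_eq_zero.mp hk.symm
    · intro h
      have hk := key n
      rw [sub_eq_zero.mpr ((main n).mpr h)] at hk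
      exact (mul_eq_zero.mp hk).resolve_left hr3
  refine ⟨hiff, ?_⟩
  intro i hi hPi hmin
  have hg1 : g ≠ 1 := by
    intro h
    have := (hiff 1).mpr (by rw [pow_one, h])
    rw [hP1] at this
    exact one_ne_zero this
  have hg2 : g ^ 2 ≠ 1 := by
    intro h
    have hP2 : P 2 = 0 := (hiff 2).mpr h
    have h2 := hPrec 1 le_rfl
    simp only [hP0, hP1, Nat.sub_self, mul_one, mul_zero, sub_zero] at h2
    rw [h2] at hP2
    apply hs0
    have : (r ^ 2) ^ 3 = 0 := by linear_combination -hP2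
    exact pow_eq_zero_iff (n := 3) (by norm_num) |>.mp this
  have hgi : g ^ (i + 1) = 1 := (hiff (i + 1)).mp hPi
  have hfin : IsOfFinOrder g :=
    isOfFinOrder_iff_pow_eq_one.mpr ⟨i + 1, by omega, hgi⟩
  have hd_pos : 0 < orderOf g := hfin.orderOf_pos
  have hd_dvd : orderOf g ∣ i + 1 := orderOf_dvd_of_pow_eq_one hgi
  have hd1 : g ^ orderOf g = 1 := pow_orderOf_eq_one g
  have hdne1 : orderOf g ≠ 1 := by
    intro h
    exact hg1 (orderOf_eq_one_iff.mp h)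
  have hdne2 : orderOf g ≠ 2 := by
    intro h
    exact hg2 (h ▸ hd1)
  have hd3 : 3 ≤ orderOf g := by omega
  have hdle : orderOf g ≤ i + 1 := Nat.le_of_dvd (by omega) hd_dvd
  have hde : orderOf g = i + 1 := by
    by_contra hne
    have hdlt : orderOf g < i + 1 := lt_of_le_of_ne hdle hne
    have hPd : P (orderOf g) = 0 := (hiff (orderOf g)).mpr hd1
    apply hmin (orderOf g - 1) (by omega) (by omega)
    rwa [Nat.sub_add_cancel (by omega)]
  exact ⟨by omega, hde.symm⟩
end

section
/- Suppose r ∈ K satisfies r² = s, and set γ = (r+1)/(r−1). Then for every integer n ≥ 0: ℛ_n = 0 if and only if γ^{3n+1} = 1. -/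
theorem stmt_6 {K : Type*} [Field K] [CharP K 3]
    (s : K) (hs0 : s ≠ 0) (hs1 : s ≠ 1)
    (P Q R : ℕ → K)
    (hP0 : P 0 = 0) (hP1 : P 1 = 1)
    (hQ0 : Q 0 = (s * (s - 1))⁻¹) (hQ1 : Q 1 = s)
    (hR0 : R 0 = -(s ^ 2)⁻¹) (hR1 : R 1 = -(s + 1))
    (hPrec : ∀ j : ℕ, 1 ≤ j → P (j + 1) = -s ^ 3 * P j - (s * (s - 1)) ^ 3 * P (j - 1))
    (hQrec : ∀ j : ℕ, 1 ≤ j → Q (j + 1) = -s ^ 3 * Q j - (s * (s - 1)) ^ 3 * Q (j - 1))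
    (hRrec : ∀ j : ℕ, 1 ≤ j → R (j + 1) = -s ^ 3 * R j - (s * (s - 1)) ^ 3 * R (j - 1))
    (r : K) (hr : r ^ 2 = s) :
    ∀ n : ℕ, R n = 0 ↔ ((r + 1) / (r - 1)) ^ (3 * n + 1) = 1 := by
  have h3 : (3 : K) = 0 := by exact_mod_cast CharP.cast_eq_zero K 3
  subst hr
  have hr0 : r ≠ 0 := by
    intro h; apply hs0; rw [h]; ring
  have hB : r - 1 ≠ 0 := by
    intro h; apply hs1
    have : r = 1 := by linear_combination h
    rw [this]; ring
  have hA : r + 1 ≠ 0 := by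
    intro h; apply hs1
    have : r = -1 := by linear_combination h
    rw [this]; ring
  -- characteristic roots
  set a : K := (r * (r + 1)) ^ 3 with ha_def
  set b : K := (r * (r - 1)) ^ 3 with hb_def
  have ha : a ^ 2 = -(r ^ 2) ^ 3 * a - (r ^ 2 * (r ^ 2 - 1)) ^ 3 := by
    rw [ha_def]; linear_combination (2*r^7 + 6*r^8 + 7*r^9 + 5*r^10 + 3*r^11 + r^12) * h3
  have hb : b ^ 2 = -(r ^ 2) ^ 3 * b - (r ^ 2 * (r ^ 2 - 1)) ^ 3 := by
    rw [hb_def]; linear_combination (-2*r^7 + 6*r^8 - 7*r^9 + 5*r^10 - 3*r^11 + r^12) * h3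
  have key : ∀ k : ℕ, r ^ 4 * R k = (r + 1) * a ^ k - (r - 1) * b ^ k ∧
      r ^ 4 * R (k + 1) = (r + 1) * a ^ (k + 1) - (r - 1) * b ^ (k + 1) := by
    intro k
    induction k with
    | zero =>
      constructor
      · have e : r ^ 4 * R 0 = -1 := by
          rw [hR0]
          field_simp
        rw [e]
        simp only [pow_zero]
        linear_combination (-1 : K) * h3
      · rw [hR1]
        simp only [pow_one, zero_add]
        linear_combination (-3*r^4 - 3*r^6) * h3
    | succ n ih =>
      refine ⟨ih.2, ?_⟩
      have hrec := hRrec (n + 1) (by omega)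
      simp only [Nat.add_sub_cancel] at hrec
      rw [show n + 1 + 1 = n + 2 from rfl] at hrec
      rw [hrec]
      linear_combination (-(r ^ 2) ^ 3) * ih.2 + (-(r ^ 2 * (r ^ 2 - 1)) ^ 3) * ih.1 +
        ((r + 1) * a ^ n) * ha + (-(r - 1) * b ^ n) * hb +
        (4*r^7*(b^n - a^n) - 16*r^8*(b^n + a^n) + 26*r^9*(b^n - a^n) - 24*r^10*(b^n + a^n)
          + 16*r^11*(b^n - a^n) - 8*r^12*(b^n + a^n) + 2*r^13*(b^n - a^n)) * h3
  intro n
  have h1 : r ^ 4 * R n = r ^ (3 * n) * ((r + 1) ^ (3 * n + 1) - (r - 1) ^ (3 * n + 1)) := by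
    rw [(key n).1, ha_def, hb_def]
    rw [← pow_mul, ← pow_mul, mul_pow, mul_pow, mul_comm 3 n, pow_succ]
    ring
  rw [div_pow, div_eq_one_iff_eq (pow_ne_zero _ hB)]
  constructor
  · intro h0
    rw [h0, mul_zero] at h1
    have hrn : r ^ (3 * n) ≠ 0 := pow_ne_zero _ hr0
    have := (mul_eq_zero.mp h1.symm).resolve_left hrn
    exact sub_eq_zero.mp this
  · intro heq
    have h2 : r ^ 4 * R n = 0 := by rw [h1, heq]; ring
    exact (mul_eq_zero.mp h2).resolve_left (pow_ne_zero 4 hr0)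
end

section
/- Let t ≥ 1 be an integer and q = 3^t. Let K be a field of characteristic 3, let β ∈ K satisfy β^{(q−1)/2} = −1, and let r ∈ K satisfy r² = β. Then ((r+1)/(r−1))^{q+1} = 1. (In particular, the multiplicative order of γ = (r+1)/(r−1) divides q+1.) -/
/-- If `β^((q-1)/2) = -1` in a field of characteristic 3 (`q = 3^t`) and `r² = β`,
then `γ = (r+1)/(r-1)` satisfies `γ^(q+1) = 1`; in particular the multiplicative
order of `γ` divides `q+1`. -/
theorem stmt_7 {K : Type*} [Field K] [CharP K 3]
    (t : ℕ) (ht : 1 ≤ t) (q : ℕ) (hq : q = 3 ^ t)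
    (β : K) (hβ : β ^ ((q - 1) / 2) = -1)
    (r : K) (hr : r ^ 2 = β) :
    ((r + 1) / (r - 1)) ^ (q + 1) = 1 ∧ orderOf ((r + 1) / (r - 1)) ∣ q + 1 := by
  have h3 : (3 : ℕ).Prime := by norm_num
  haveI : Fact (Nat.Prime 3) := ⟨h3⟩
  have hone : (1 : K) ≠ -1 := by
    intro h
    have h2 : (2 : K) = 0 := by linear_combination h
    have := CharP.cast_eq_zero_iff K 3 2
    rw [show ((2:ℕ):K) = (2:K) by norm_num] at this
    have := this.mp h2
    norm_num at this
  have hq3 : 3 ≤ q := by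
    rw [hq]
    calc (3:ℕ) = 3 ^ 1 := by norm_num
    _ ≤ 3 ^ t := Nat.pow_le_pow_right (by norm_num) ht
  have hqodd : Odd q := by
    rw [hq]; exact Odd.pow ⟨1, by norm_num⟩
  have heven : 2 ∣ q - 1 := by
    obtain ⟨k, hk⟩ := hqodd
    omega
  have h2 : 2 * ((q - 1) / 2) = q - 1 := Nat.mul_div_cancel' heven
  have hr1 : r ^ (q - 1) = -1 := by
    rw [← h2, mul_comm, pow_mul', hr, hβ]
  have hrq : r ^ q = -r := by
    have : q = (q - 1) + 1 := by omega
    rw [this, pow_succ, hr1]; ring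
  have hrne1 : r ≠ 1 := by
    intro h
    rw [h, one_pow] at hr1
    exact hone hr1
  have hrnem1 : r ≠ -1 := by
    intro h
    rw [h, ← h2, mul_comm, pow_mul', neg_one_sq, one_pow] at hr1
    exact hone hr1
  have hd1 : r - 1 ≠ 0 := fun h => hrne1 (by linear_combination h)
  have hd2 : r + 1 ≠ 0 := fun h => hrnem1 (by linear_combination h)
  have hfrob : ∀ x y : K, (x + y) ^ q = x ^ q + y ^ q := by
    intro x y
    rw [hq]
    exact add_pow_char_pow x y 3 t
  have key : ((r + 1) / (r - 1)) ^ (q + 1) = 1 := by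
    rw [pow_succ, div_pow, hfrob]
    have hsub : (r - 1) ^ q = r ^ q - 1 := by
      have := hfrob r (-1)
      rw [show r + -1 = r - 1 by ring] at this
      rw [this]
      have : (-1 : K) ^ q = -1 := hqodd.neg_one_pow
      rw [this]; ring
    rw [hsub, hrq, one_pow]
    have hne : -r - 1 ≠ 0 := fun h => hd2 (by linear_combination -h)
    field_simp
    ring
  exact ⟨key, orderOf_dvd_of_pow_eq_one key⟩
end

section
/- Let t ≥ 1 be an integer and q = 3^t. The numerical semigroup generated by {2q/3, q, q+1} has exactly q(q−1)/6 gaps; that is, the complement in ℕ of the additive submonoid of ℕ generated by 2q/3, q and q+1 is a finite set with exactly q(q−1)/6 elements. -/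
/-!
Write `q = 3s` and `n = sk + r` with `r < s`. Since `q + 1 ≡ 1 (mod s)`, a representation of `n`
uses at least `r` copies of `q + 1`, costing `3r` in the quotient `k`, and the rest is `s` times an
element of `⟨2, 3⟩ = ℕ \ {1}`. So `n` is a gap exactly when `k < 3r` or `k = 3r + 1`: there are
`3r + 1` gaps in each residue class `r`, in total `∑_{r<s} (3r + 1) = s(3s - 1)/2 = q(q - 1)/6`.
-/

open Finset

theorem AddSubmonoid.mem_closure_triple {A : Type*} [AddCommMonoid A] (a b c d : A) :
    d ∈ closure ({a, b, c} : Set A) ↔ ∃ l m n : ℕ, l • a + m • b + n • c = d := by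
  rw [← Set.singleton_union, closure_union, mem_sup]
  simp [mem_closure_singleton, mem_closure_pair, add_assoc]

/-- With `q = 3 * s` this is `⟨2q/3, q, q + 1⟩`. -/
def semigroupZ3 (s : ℕ) : AddSubmonoid ℕ := AddSubmonoid.closure {2 * s, 3 * s, 3 * s + 1}

theorem mul_add_mem_semigroupZ3_iff {s k r : ℕ} (hr : r < s) :
    s * k + r ∈ semigroupZ3 s ↔ 3 * r ≤ k ∧ k ≠ 3 * r + 1 := by
  have hs : 0 < s := by omega
  rw [semigroupZ3, AddSubmonoid.mem_closure_triple]
  simp only [smul_eq_mul]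
  constructor
  · rintro ⟨a, b, c, h⟩
    have hcr : c % s = r := by
      have : s * (2 * a + 3 * b + 3 * c) + c = s * k + r := by rw [← h]; ring
      simpa [Nat.mul_add_mod, Nat.mod_eq_of_lt hr] using congrArg (· % s) this
    obtain ⟨d, hc⟩ : ∃ d, s * d + r = c := ⟨c / s, hcr ▸ Nat.div_add_mod c s⟩
    have hk : k = 2 * a + 3 * b + 3 * c + d :=
      Nat.eq_of_mul_eq_mul_left hs (by linarith)
    -- `k = 3r + 1` would force `2a + 3b + 3sd + d = 1`
    rcases Nat.eq_zero_or_pos d with rfl | hd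
    · omega
    · have : 1 ≤ s * d := Nat.mul_pos hs hd
      omega
  · rintro ⟨hrk, hk⟩
    obtain ⟨m, hm | hm⟩ := Nat.even_or_odd' (k - 3 * r)
    · exact ⟨m, 0, r, by rw [← Nat.add_sub_of_le hrk, hm]; ring⟩
    · obtain ⟨m, rfl⟩ : ∃ m', m = m' + 1 := Nat.exists_eq_add_one.mpr (by omega)
      exact ⟨m, 1, r, by rw [← Nat.add_sub_of_le hrk, hm]; ring⟩

def gapsZ3 (s : ℕ) : Finset ℕ :=
  ((range s).sigma fun r => insert (3 * r + 1) (range (3 * r))).image fun p => s * p.2 + p.1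

theorem coe_gapsZ3 (s : ℕ) : (gapsZ3 s : Set ℕ) = {n | n ∉ semigroupZ3 s} := by
  ext n
  simp only [gapsZ3, coe_image, coe_sigma, Set.mem_image, Set.mem_sigma_iff, mem_coe, mem_range,
    mem_insert, Set.mem_ofPred_eq]
  constructor
  · rintro ⟨⟨r, k⟩, ⟨hr, hk⟩, rfl⟩
    rw [mul_add_mem_semigroupZ3_iff hr]
    omega
  · intro hn
    have hs : 0 < s := Nat.pos_of_ne_zero fun h => hn (by simp [h, semigroupZ3])
    rw [← Nat.div_add_mod n s, mul_add_mem_semigroupZ3_iff (Nat.mod_lt n hs)] at hn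
    exact ⟨⟨n % s, n / s⟩, ⟨Nat.mod_lt n hs, by dsimp only; omega⟩, Nat.div_add_mod n s⟩

theorem card_gapsZ3 (s : ℕ) : #(gapsZ3 s) = ∑ r ∈ range s, (3 * r + 1) := by
  rw [gapsZ3, card_image_of_injOn, card_sigma]
  · refine sum_congr rfl fun r _ => ?_
    rw [card_insert_of_notMem (by simp), card_range]
  · rintro ⟨r, k⟩ hrk ⟨r', k'⟩ hrk' h
    simp only [coe_sigma, Set.mem_sigma_iff, mem_coe, mem_range] at hrk hrk' h
    have hs : 0 < s := by omega
    have e := (Nat.div_mod_unique hs).2 ⟨add_comm r (s * k), hrk.1⟩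
    have e' := (Nat.div_mod_unique hs).2 ⟨add_comm r' (s * k'), hrk'.1⟩
    rw [h] at e
    obtain ⟨rfl, rfl⟩ : k = k' ∧ r = r' := ⟨e.1.symm.trans e'.1, e.2.symm.trans e'.2⟩
    rfl

theorem two_mul_sum_range_three_mul_add_one (s : ℕ) :
    2 * ∑ r ∈ range s, (3 * r + 1) = s * (3 * s - 1) := by
  induction s with
  | zero => simp
  | succ s ih =>
    rw [sum_range_succ, mul_add, ih, show 3 * (s + 1) - 1 = 3 * s + 2 by omega]
    rcases s.eq_zero_or_pos with rfl | hs
    · rfl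
    · zify [show 1 ≤ 3 * s by omega]
      ring

/-- The numerical semigroup `⟨2q/3, q, q+1⟩` (with `q = 3^t`) has exactly
`q(q-1)/6` gaps.  This is the Weierstrass semigroup `H(P_∞)` of the maximal
function field `Z₃` of genus `q(q-1)/6`. -/
theorem stmt_8 (t : ℕ) (ht : 1 ≤ t) (q : ℕ) (hq : q = 3 ^ t) :
    {n : ℕ | n ∉ AddSubmonoid.closure ({2 * q / 3, q, q + 1} : Set ℕ)}.Finite ∧
    {n : ℕ | n ∉ AddSubmonoid.closure ({2 * q / 3, q, q + 1} : Set ℕ)}.ncard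
      = q * (q - 1) / 6 := by
  obtain ⟨s, rfl⟩ : ∃ s, q = 3 * s := ⟨3 ^ (t - 1), by rw [hq, ← pow_succ', Nat.sub_add_cancel ht]⟩
  have hS : AddSubmonoid.closure {2 * (3 * s) / 3, 3 * s, 3 * s + 1} = semigroupZ3 s := by
    rw [semigroupZ3, show 2 * (3 * s) / 3 = 2 * s by omega]
  rw [hS, ← coe_gapsZ3, Set.ncard_coe_finset, card_gapsZ3]
  refine ⟨(gapsZ3 s).finite_toSet, ?_⟩
  have hsum : 3 * s * (3 * s - 1) = 6 * ∑ r ∈ range s, (3 * r + 1) := by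
    rw [mul_assoc, ← two_mul_sum_range_three_mul_add_one]
    ring
  rw [hsum, Nat.mul_div_cancel_left _ (by norm_num)]
end

section
/- Let t ≥ 1 be an integer and q = 3^t. The numerical semigroup generated by {q−1, q, q+1, 2q−4} has exactly q(q−1)/6 gaps; that is, the complement in ℕ of the additive submonoid of ℕ generated by q−1, q, q+1 and 2q−4 is a finite set with exactly q(q−1)/6 elements. -/
/-!
Write `n = a * q + b` with `b < q`. Sums of `k` elements of `{q - 1, q, q + 1}` fill the interval
`[k(q - 1), k(q + 1)]`, so adding `w` copies of `2q - 4` and putting `j = k + 2w`, the semigroup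
is the union of the intervals `[jq - j - 2w, jq + j - 6w]` with `2w ≤ j`. Only the levels `j = a`
and `j = a + 1` meet `[aq, aq + q)`: level `a` covers `b ≤ a`, and level `a + 1` covers
`b ≥ q - 2a - 1`, except that for odd `a` it covers `b = q - 2a - 2` but misses `b = q - 2a - 1`.
So row `a` holds `q - (3a + 2)` gaps (unless `q ≡ 5 mod 6`), and these add up to `q(q - 1)/6`
as soon as `3 ∣ q(q - 1)`.
-/

open Finset

theorem Nat.mem_addSubmonoidClosure_Icc_iff {u v n : ℕ} :
    n ∈ AddSubmonoid.closure (Set.Icc u v) ↔ ∃ k, k * u ≤ n ∧ n ≤ k * v := by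
  constructor
  · intro h
    induction h using AddSubmonoid.closure_induction with
    | mem x hx => exact ⟨1, by simpa using hx⟩
    | zero => exact ⟨0, by simp⟩
    | add x y _ _ ihx ihy =>
      obtain ⟨k, hk⟩ := ihx
      obtain ⟨l, hl⟩ := ihy
      exact ⟨k + l, by rw [add_mul, add_mul]; omega⟩
  · rintro ⟨k, hk⟩
    induction k generalizing n with
    | zero => simp_all
    | succ k ih =>
      have huv : u ≤ v := le_of_mul_le_mul_left (hk.1.trans hk.2) k.succ_pos
      rw [add_one_mul, add_one_mul] at hk
      have hx : min v (n - k * u) ∈ Set.Icc u v := ⟨le_min huv (by omega), min_le_left _ _⟩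
      have hkuv : k * u ≤ k * v := Nat.mul_le_mul_left k huv
      have hrest := ih (n := n - min v (n - k * u)) (by omega)
      rw [show n = n - min v (n - k * u) + min v (n - k * u) by omega]
      exact add_mem hrest (AddSubmonoid.subset_closure hx)

theorem AddSubmonoid.mem_closure_insert_iff {M : Type*} [AddCommMonoid M] {g x : M}
    {s : Set M} :
    x ∈ closure (insert g s) ↔ ∃ w : ℕ, ∃ y ∈ closure s, w • g + y = x := by
  rw [Set.insert_eq, closure_union, mem_sup]
  simp only [mem_closure_singleton, exists_exists_eq_and]

def z3Semigroup (q : ℕ) : AddSubmonoid ℕ :=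
  AddSubmonoid.closure {q - 1, q, q + 1, 2 * q - 4}

theorem mem_z3Semigroup_iff {q n : ℕ} : n ∈ z3Semigroup q ↔
    ∃ k w, k * (q - 1) + w * (2 * q - 4) ≤ n ∧ n ≤ k * (q + 1) + w * (2 * q - 4) := by
  have hgens : ({q - 1, q, q + 1, 2 * q - 4} : Set ℕ) =
      insert (2 * q - 4) (Set.Icc (q - 1) (q + 1)) := by
    ext x; simp; omega
  rw [z3Semigroup, hgens, AddSubmonoid.mem_closure_insert_iff]
  constructor
  · rintro ⟨w, y, hy, rfl⟩
    obtain ⟨k, hk⟩ := Nat.mem_addSubmonoidClosure_Icc_iff.1 hy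
    exact ⟨k, w, by simp only [smul_eq_mul]; omega⟩
  · rintro ⟨k, w, hk⟩
    refine ⟨w, n - w * (2 * q - 4), Nat.mem_addSubmonoidClosure_Icc_iff.2 ⟨k, by omega⟩, ?_⟩
    simp only [smul_eq_mul]; omega

def IsGapDigits (q a b : ℕ) : Prop :=
  a < b ∧ (a % 2 = 0 ∧ b + 2 * a + 2 ≤ q ∨
    a % 2 = 1 ∧ (b + 2 * a + 3 ≤ q ∨ b + 2 * a + 1 = q))

instance (q a : ℕ) : DecidablePred (IsGapDigits q a) := fun _ => by
  unfold IsGapDigits; infer_instance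

theorem mul_add_notMem_z3Semigroup {q a b : ℕ} (h : IsGapDigits q a b) :
    a * q + b ∉ z3Semigroup q := by
  unfold IsGapDigits at h
  obtain ⟨p, rfl⟩ : ∃ p, q = p + 2 := ⟨q - 2, by omega⟩
  rw [mem_z3Semigroup_iff]
  rintro ⟨k, w, hlow, hup⟩
  simp only [show p + 2 - 1 = p + 1 by omega, show 2 * (p + 2) - 4 = 2 * p by omega]
    at hlow hup
  obtain hj | hj | hj : k + 2 * w ≤ a ∨ k + 2 * w = a + 1 ∨ a + 2 ≤ k + 2 * w := by omega
  · have := Nat.mul_le_mul_right p hj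
    ring_nf at *; omega
  · have := congrArg (· * p) hj
    ring_nf at *; omega
  · have := Nat.mul_le_mul_right p hj
    ring_nf at *; omega

theorem mul_add_mem_z3Semigroup {q a b : ℕ} (hb : b < q) (h : ¬ IsGapDigits q a b) :
    a * q + b ∈ z3Semigroup q := by
  unfold IsGapDigits at h
  rw [mem_z3Semigroup_iff]
  by_cases hba : b ≤ a
  · refine ⟨a, 0, ?_, ?_⟩
    · rw [Nat.mul_sub_one]; omega
    · rw [Nat.mul_add_one]; omega
  obtain ⟨p, rfl⟩ : ∃ p, q = p + 2 := ⟨q - 2, by omega⟩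
  rw [show p + 2 - 1 = p + 1 by omega, show 2 * (p + 2) - 4 = 2 * p by omega]
  -- level `a + 1`, with `w = ⌈(q - b - (a + 1)) / 2⌉` copies of `2q - 4`
  set w := (p + 2 - b - a) / 2
  obtain ⟨k, hk⟩ : ∃ k, k + 2 * w = a + 1 := ⟨a + 1 - 2 * w, by omega⟩
  refine ⟨k, w, ?_, ?_⟩
  · have := congrArg (· * p) hk
    ring_nf at *; omega
  · have := congrArg (· * p) hk
    ring_nf at *; omega

theorem notMem_z3Semigroup_iff {q n : ℕ} (hq : 0 < q) :
    n ∉ z3Semigroup q ↔ IsGapDigits q (n / q) (n % q) := by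
  have hn : n / q * q + n % q = n := Nat.div_add_mod' n q
  constructor
  · intro hgap
    by_contra h
    exact hgap (hn ▸ mul_add_mem_z3Semigroup (Nat.mod_lt n hq) h)
  · intro h
    exact hn ▸ mul_add_notMem_z3Semigroup h

theorem Nat.mul_add_div_mod_eq {q a b : ℕ} (hb : b < q) :
    (a * q + b) / q = a ∧ (a * q + b) % q = b :=
  (Nat.div_mod_unique (by omega)).2 ⟨by ring, hb⟩

def gapFinset (q : ℕ) : Finset ℕ :=
  ((range q ×ˢ range q).filter fun d => IsGapDigits q d.1 d.2).image fun d => d.1 * q + d.2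

theorem setOf_notMem_z3Semigroup {q : ℕ} (hq : 0 < q) :
    {n | n ∉ z3Semigroup q} = gapFinset q := by
  ext n
  simp only [Set.mem_ofPred_eq, notMem_z3Semigroup_iff hq, gapFinset, coe_image, coe_filter,
    mem_product, mem_range, Set.mem_image, Prod.exists]
  constructor
  · intro h
    exact ⟨n / q, n % q, ⟨⟨by unfold IsGapDigits at h; omega, Nat.mod_lt n hq⟩, h⟩,
      Nat.div_add_mod' n q⟩
  · rintro ⟨a, b, ⟨⟨-, hb⟩, h⟩, rfl⟩
    rwa [(Nat.mul_add_div_mod_eq hb).1, (Nat.mul_add_div_mod_eq hb).2]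

theorem card_filter_isGapDigits {q : ℕ} (hq : q % 6 ≠ 5) (a : ℕ) :
    #{b ∈ range q | IsGapDigits q a b} = q - (3 * a + 2) := by
  rcases Nat.mod_two_eq_zero_or_one a with ha | ha
  · have : {b ∈ range q | IsGapDigits q a b} = Ico (a + 1) (q - 2 * a - 1) := by
      ext b; simp only [mem_filter, mem_range, mem_Ico]; unfold IsGapDigits; omega
    rw [this, Nat.card_Ico]; omega
  · -- for odd `a` the hole of level `a + 1` at `b = q - 2a - 1` replaces `b = q - 2a - 2`
    have : {b ∈ range q | IsGapDigits q a b} =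
        (Ico (a + 1) (q - 2 * a - 1)).map
          (Equiv.swap (q - 2 * a - 2) (q - 2 * a - 1)).toEmbedding := by
      ext b
      simp only [mem_filter, mem_range, mem_map_equiv, Equiv.symm_swap, Equiv.swap_apply_def,
        mem_Ico]
      unfold IsGapDigits
      split_ifs <;> omega
    rw [this, card_map, Nat.card_Ico]; omega

theorem card_gapFinset {q : ℕ} (hq : q % 6 ≠ 5) :
    #(gapFinset q) = ∑ a ∈ range q, (q - (3 * a + 2)) := by
  rw [gapFinset, card_image_of_injOn, card_eq_sum_ones, sum_filter, sum_product]
  · refine sum_congr rfl fun a _ => ?_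
    rw [← card_filter_isGapDigits hq, card_eq_sum_ones, sum_filter]
  · rintro ⟨a, b⟩ hab ⟨a', b'⟩ hab' h
    simp only [coe_filter, mem_product, mem_range, Set.mem_ofPred_eq] at hab hab' h
    have := Nat.mul_add_div_mod_eq (a := a) hab.1.2
    rw [h, (Nat.mul_add_div_mod_eq hab'.1.2).1, (Nat.mul_add_div_mod_eq hab'.1.2).2] at this
    rw [this.1, this.2]

theorem six_mul_sum_range_sub {q N : ℕ} (hN : q ≤ 3 * N) (hq : q % 3 ≠ 2) :
    6 * ∑ a ∈ range N, (q - (3 * a + 2)) = q * (q - 1) := by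
  induction N generalizing q with
  | zero => simp [show q = 0 by omega]
  | succ N ih =>
    rw [sum_range_succ']
    obtain hq1 | ⟨p, rfl⟩ : q ≤ 1 ∨ ∃ p, q = p + 3 := by
      rcases le_or_gt q 2 with h | h
      · left; omega
      · exact Or.inr ⟨q - 3, by omega⟩
    · rw [sum_eq_zero fun a _ => by omega]
      interval_cases q <;> rfl
    · have hshift : ∑ a ∈ range N, (p + 3 - (3 * (a + 1) + 2)) =
          ∑ a ∈ range N, (p - (3 * a + 2)) :=
        sum_congr rfl fun a _ => by omega
      rw [hshift, mul_add, ih (by omega) (by omega), show p + 3 - (3 * 0 + 2) = p + 1 by omega,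
        show p + 3 - 1 = p + 2 by omega]
      rcases p with _ | p
      · rfl
      · rw [Nat.add_sub_cancel]; ring

theorem ncard_gaps_z3Semigroup {q : ℕ} (hq : 0 < q) (h3 : q % 3 ≠ 2) :
    {n | n ∉ z3Semigroup q}.Finite ∧ {n | n ∉ z3Semigroup q}.ncard = q * (q - 1) / 6 := by
  rw [setOf_notMem_z3Semigroup hq]
  refine ⟨(gapFinset q).finite_toSet, ?_⟩
  rw [Set.ncard_coe_finset, card_gapFinset (by omega)]
  have := six_mul_sum_range_sub (N := q) (by omega) h3
  omega

theorem stmt_9_general (t : ℕ) (q : ℕ) (hq : q = 3 ^ t) :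
    {n : ℕ | n ∉ AddSubmonoid.closure ({q - 1, q, q + 1, 2 * q - 4} : Set ℕ)}.Finite ∧
    {n : ℕ | n ∉ AddSubmonoid.closure ({q - 1, q, q + 1, 2 * q - 4} : Set ℕ)}.ncard
      = q * (q - 1) / 6 := by
  have h3 : q % 3 ≠ 2 := by
    rcases t with _ | t <;> simp [hq, pow_succ]
  exact ncard_gaps_z3Semigroup (hq ▸ by positivity) h3

/-- The numerical semigroup `⟨q-1, q, q+1, 2q-4⟩` (with `q = 3^t`) has exactly
`q(q-1)/6` gaps.  This is the Weierstrass semigroup at the places `P_{(a,b)}`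
of `Z₃` with `β(P) = 0`. -/
theorem stmt_9 (t : ℕ) (ht : 1 ≤ t) (q : ℕ) (hq : q = 3 ^ t) :
    {n : ℕ | n ∉ AddSubmonoid.closure ({q - 1, q, q + 1, 2 * q - 4} : Set ℕ)}.Finite ∧
    {n : ℕ | n ∉ AddSubmonoid.closure ({q - 1, q, q + 1, 2 * q - 4} : Set ℕ)}.ncard
      = q * (q - 1) / 6 :=
  stmt_9_general t q hq
end

section
/- Let t ≥ 1 be an integer, q = 3^t and m = q/3. The numerical semigroup generated by the set {q, q+1} ∪ {(q−1) + j(q−2) : j = 0, 1, …, m−1} has exactly q(q−1)/6 gaps; that is, the complement in ℕ of the additive submonoid of ℕ generated by this set is a finite set with exactly q(q−1)/6 elements. -/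
namespace Stmt10Aux

def Gset (p m : ℕ) : Set ℕ :=
  ({p + 2, p + 3} : Set ℕ) ∪ {n : ℕ | ∃ j : ℕ, j < m ∧ n = (p + 1) + j * p}

lemma pm1_mem (p m : ℕ) (hm : 1 ≤ m) : (p + 1) ∈ Gset p m :=
  Or.inr ⟨0, hm, by ring⟩

lemma q_mem (p m : ℕ) : (p + 2) ∈ Gset p m := Or.inl (Or.inl rfl)
lemma q1_mem (p m : ℕ) : (p + 3) ∈ Gset p m := Or.inl (Or.inr rfl)

lemma mul_mem_cl {G : Set ℕ} {x : ℕ} (hx : x ∈ AddSubmonoid.closure G) (r : ℕ) :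
    r * x ∈ AddSubmonoid.closure G := by
  simpa [nsmul_eq_mul] using nsmul_mem hx r

lemma L1 (p m : ℕ) (hm : 1 ≤ m) (k n : ℕ) (h1 : k * (p + 1) ≤ n) (h2 : n ≤ k * (p + 3)) :
    n ∈ AddSubmonoid.closure (Gset p m) := by
  have hq : (p + 2) ∈ AddSubmonoid.closure (Gset p m) := AddSubmonoid.subset_closure (q_mem p m)
  have hq1 : (p + 3) ∈ AddSubmonoid.closure (Gset p m) := AddSubmonoid.subset_closure (q1_mem p m)
  have hp1 : (p + 1) ∈ AddSubmonoid.closure (Gset p m) :=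
    AddSubmonoid.subset_closure (pm1_mem p m hm)
  obtain ⟨r, rfl⟩ : ∃ r, n = k * (p + 1) + r := ⟨n - k * (p+1), by omega⟩
  have hr2 : r ≤ 2 * k := by nlinarith
  rcases le_or_gt r k with h | h
  · have e : k * (p + 1) + r = r * (p + 2) + (k - r) * (p + 1) := by
      zify [h]; ring
    rw [e]
    exact add_mem (mul_mem_cl hq r) (mul_mem_cl hp1 _)
  · have e : k * (p + 1) + r = (r - k) * (p + 3) + (2 * k - r) * (p + 2) := by
      zify [h.le, hr2]; ring
    rw [e]
    exact add_mem (mul_mem_cl hq1 _) (mul_mem_cl hq _)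

lemma L2 (p m : ℕ) (s k : ℕ) (hs : s < m) (hk : s + 1 ≤ k) :
    k * (p + 1) - s ∈ AddSubmonoid.closure (Gset p m) := by
  have hgen : (p + 1) + s * p ∈ AddSubmonoid.closure (Gset p m) :=
    AddSubmonoid.subset_closure (Or.inr ⟨s, hs, rfl⟩)
  have hp1 : (p + 1) ∈ AddSubmonoid.closure (Gset p m) :=
    AddSubmonoid.subset_closure (pm1_mem p m (by omega))
  have e : k * (p + 1) - s = ((p + 1) + s * p) + (k - s - 1) * (p + 1) := by
    zify [show s ≤ k * (p+1) by nlinarith, show s ≤ k by omega, show 1 ≤ k - s by omega]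
    ring
  rw [e]
  exact add_mem hgen (mul_mem_cl hp1 _)

/-- everything outside the gap intervals is in the closure -/
lemma T_sub_closure (p m : ℕ) (hm : 1 ≤ m) (hq3 : p + 2 = 3 * m) (n : ℕ)
    (hT : ∀ k, k < m → ¬(k * (p + 3) < n ∧ n ≤ (k + 1) * p)) :
    n ∈ AddSubmonoid.closure (Gset p m) := by
  rcases Nat.eq_zero_or_pos n with rfl | hn
  · exact zero_mem _
  rcases le_or_gt n (m * p) with hcase | hcase
  · -- small case : interval i
    have hp0 : 0 < p := by omega
    have hd : p * ((n-1)/p) + (n-1) % p = n - 1 := Nat.div_add_mod _ _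
    have hmod : (n-1) % p < p := Nat.mod_lt _ hp0
    set i := (n - 1) / p with hi
    obtain ⟨a, ha⟩ : ∃ a, a = p * i := ⟨_, rfl⟩
    rw [← ha] at hd
    have hi1 : a + 1 ≤ n := by omega
    have hi2 : n ≤ a + p := by omega
    have him : i < m := by
      by_contra h
      have h2 : p * m ≤ p * i := Nat.mul_le_mul_left p (by omega)
      have h3 : p * m = m * p := Nat.mul_comm _ _
      omega
    have hA : i * (p + 3) = a + 3 * i := by rw [ha]; ring
    have hB : i * (p + 1) = a + i := by rw [ha]; ring
    have hC : (i + 1) * p = a + p := by rw [ha]; ring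
    have hup : n ≤ i * (p + 3) := by
      by_contra hcon
      exact (hT i him) ⟨by omega, by omega⟩
    have hi0 : 1 ≤ i := by omega
    rcases le_or_gt (i * (p + 1)) n with h | h
    · exact L1 p m hm i n h hup
    · have hs : i * (p + 1) - n < m := by omega
      have hsk : (i * (p + 1) - n) + 1 ≤ i := by omega
      have key := L2 p m (i * (p + 1) - n) i hs hsk
      have e : i * (p + 1) - (i * (p + 1) - n) = n := by omega
      rwa [e] at key
  · -- large case
    have hd : (p+3) * ((n + p + 2) / (p + 3)) + (n + p + 2) % (p + 3) = n + p + 2 :=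
      Nat.div_add_mod _ _
    have hmod : (n + p + 2) % (p + 3) < p + 3 := Nat.mod_lt _ (by omega)
    set d := (n + p + 2) / (p + 3) with hdd
    obtain ⟨b, hb⟩ : ∃ b, b = (p + 3) * d := ⟨_, rfl⟩
    rw [← hb] at hd
    have hb1 : n ≤ b := by omega
    have hb2 : b ≤ n + p + 2 := by omega
    set k := max m d with hk
    have hkd : d ≤ k := le_max_right _ _
    have hkm : m ≤ k := le_max_left _ _
    obtain ⟨c, hc⟩ : ∃ c, c = k * (p + 1) := ⟨_, rfl⟩
    have hub : n ≤ k * (p + 3) := by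
      have h1 : d * (p + 3) ≤ k * (p + 3) := Nat.mul_le_mul_right _ hkd
      have h2 : d * (p + 3) = (p + 3) * d := Nat.mul_comm _ _
      omega
    have hlow : c ≤ n + (m - 1) := by
      rcases le_or_gt d m with hdm | hdm
      · have hkm' : k = m := max_eq_left hdm
        have e1 : c = m * p + m := by rw [hc, hkm']; ring
        omega
      · have hkd' : k = d := max_eq_right hdm.le
        have e1 : b = c + 2 * k := by rw [hb, hc, hkd']; ring
        omega
    rcases le_or_gt (k * (p+1)) n with h | h
    · exact L1 p m hm k n h hub
    · have hs : k * (p + 1) - n < m := by omega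
      have hsk : (k * (p + 1) - n) + 1 ≤ k := by omega
      have key := L2 p m (k * (p + 1) - n) k hs hsk
      have e : k * (p + 1) - (k * (p + 1) - n) = n := by omega
      rwa [e] at key

/-- the complement of the gap intervals is an additive submonoid -/
def Tmon (p m : ℕ) : AddSubmonoid ℕ where
  carrier := {n : ℕ | ∀ k, k < m → ¬(k * (p + 3) < n ∧ n ≤ (k + 1) * p)}
  zero_mem' := by intro k hk h; omega
  add_mem' := by
    intro x y hx hy k hk hcon
    obtain ⟨hk1, hk2⟩ := hcon
    rcases Nat.eq_zero_or_pos x with rfl | hx0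
    · exact hy k hk ⟨by omega, by omega⟩
    rcases Nat.eq_zero_or_pos y with rfl | hy0
    · exact hx k hk ⟨by omega, by omega⟩
    rcases Nat.eq_zero_or_pos p with rfl | hp0
    · -- p = 0 : gap condition gives x + y ≤ 0, impossible
      omega
    -- structure of x
    have hdx : p * ((x-1)/p) + (x-1) % p = x - 1 := Nat.div_add_mod _ _
    have hmodx : (x-1) % p < p := Nat.mod_lt _ hp0
    set i := (x - 1) / p with hi
    obtain ⟨ai, hai⟩ : ∃ a, a = p * i := ⟨_, rfl⟩
    rw [← hai] at hdx
    have hx1 : ai + 1 ≤ x := by omega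
    have hx2 : x ≤ ai + p := by omega
    have hdy : p * ((y-1)/p) + (y-1) % p = y - 1 := Nat.div_add_mod _ _
    have hmody : (y-1) % p < p := Nat.mod_lt _ hp0
    set j := (y - 1) / p with hj
    obtain ⟨aj, haj⟩ : ∃ a, a = p * j := ⟨_, rfl⟩
    rw [← haj] at hdy
    have hy1 : aj + 1 ≤ y := by omega
    have hy2 : y ≤ aj + p := by omega
    have hkp : (k + 1) * p ≤ m * p := Nat.mul_le_mul_right p (by omega)
    rcases le_or_gt m i with him | him
    · have h2 : p * m ≤ p * i := Nat.mul_le_mul_left p him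
      have h3 : p * m = m * p := Nat.mul_comm _ _
      omega
    rcases le_or_gt m j with hjm | hjm
    · have h2 : p * m ≤ p * j := Nat.mul_le_mul_left p hjm
      have h3 : p * m = m * p := Nat.mul_comm _ _
      omega
    -- both below m : use upper bounds from hx, hy
    have eX : (i + 1) * p = ai + p := by rw [hai]; ring
    have eX3 : i * (p + 3) = ai + 3 * i := by rw [hai]; ring
    have hxu : x ≤ i * (p + 3) := by
      by_contra hcon
      exact (hx i him) ⟨by omega, by omega⟩
    have eY : (j + 1) * p = aj + p := by rw [haj]; ring
    have eY3 : j * (p + 3) = aj + 3 * j := by rw [haj]; ring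
    have hyu : y ≤ j * (p + 3) := by
      by_contra hcon
      exact (hy j hjm) ⟨by omega, by omega⟩
    rcases le_or_gt (i + j) k with hij | hij
    · have h1 : (i + j) * (p + 3) ≤ k * (p + 3) := Nat.mul_le_mul_right _ hij
      have h2 : (i + j) * (p + 3) = ai + aj + 3 * i + 3 * j := by rw [hai, haj]; ring
      omega
    · have h1 : (k + 1) * p ≤ (i + j) * p := Nat.mul_le_mul_right _ (by omega)
      have h2 : (i + j) * p = ai + aj := by rw [hai, haj]; ring
      omega

lemma gen_sub_Tmon (p m : ℕ) : Gset p m ⊆ (Tmon p m : Set ℕ) := by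
  rintro x (hx | hx)
  · -- x = p+2 or p+3
    have hx' : x = p + 2 ∨ x = p + 3 := by
      rcases hx with h | h
      · exact Or.inl h
      · exact Or.inr h
    intro k hk hcon
    obtain ⟨h1, h2⟩ := hcon
    rcases Nat.eq_zero_or_pos k with rfl | hk0
    · have e : (0 + 1) * p = p := by ring
      omega
    · have h3 : 1 * (p + 3) ≤ k * (p + 3) := Nat.mul_le_mul_right _ hk0
      have e : 1 * (p + 3) = p + 3 := by ring
      omega
  · obtain ⟨j, hj, rfl⟩ := hx
    intro k hk hcon
    obtain ⟨h1, h2⟩ := hcon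
    rcases le_or_gt k j with hkj | hkj
    · have h3 : (k + 1) * p ≤ (j + 1) * p := Nat.mul_le_mul_right _ (by omega)
      have e : (j + 1) * p = j * p + p := by ring
      omega
    · have h3 : (j + 1) * (p + 3) ≤ k * (p + 3) := Nat.mul_le_mul_right _ hkj
      have e : (j + 1) * (p + 3) = j * p + 3 * j + p + 3 := by ring
      omega

lemma closure_sub_Tmon (p m : ℕ) {n : ℕ} (hn : n ∈ AddSubmonoid.closure (Gset p m)) :
    ∀ k, k < m → ¬(k * (p + 3) < n ∧ n ≤ (k + 1) * p) :=
  AddSubmonoid.closure_le.mpr (gen_sub_Tmon p m) hn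

end Stmt10Aux
namespace Stmt10Aux2

lemma disj (p m : ℕ) : ∀ x ∈ Finset.range m, ∀ y ∈ Finset.range m, x ≠ y →
    Disjoint (Finset.Ico (x*(p+3)+1) ((x+1)*p+1)) (Finset.Ico (y*(p+3)+1) ((y+1)*p+1)) := by
  intro x _ y _ hxy
  rw [Finset.disjoint_left]
  intro n hnx hny
  simp only [Finset.mem_Ico] at hnx hny
  rcases lt_or_gt_of_ne hxy with h | h
  · have h1 : (x + 1) * p ≤ y * (p + 3) := Nat.mul_le_mul (by omega) (by omega)
    omega
  · have h1 : (y + 1) * p ≤ x * (p + 3) := Nat.mul_le_mul (by omega) (by omega)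
    omega

lemma card_lemma (p m : ℕ) (hm : 1 ≤ m) (hq3 : p + 2 = 3 * m) :
    ((Finset.range m).biUnion
      (fun k => Finset.Ico (k*(p+3)+1) ((k+1)*p+1))).card = (p+2)*(p+1)/6 := by
  rw [Finset.card_biUnion (disj p m)]
  have e1 : ∀ k ∈ Finset.range m,
      (Finset.Ico (k*(p+3)+1) ((k+1)*p+1)).card = 3 * (m - 1 - k) + 1 := by
    intro k hk
    rw [Finset.mem_range] at hk
    rw [Nat.card_Ico]
    have e1 : (k+1)*p = k*p + p := by ring
    have e2 : k*(p+3) = k*p + 3*k := by ring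
    omega
  rw [Finset.sum_congr rfl e1]
  rw [show (fun k => 3 * (m - 1 - k) + 1) = (fun k => (fun j => 3 * j + 1) (m - 1 - k)) from rfl]
  rw [Finset.sum_range_reflect (fun j => 3 * j + 1) m]
  have hsum : (∑ j ∈ Finset.range m, (3 * j + 1)) = 3 * (∑ j ∈ Finset.range m, j) + m := by
    rw [Finset.sum_add_distrib, Finset.mul_sum]
    simp
  rw [hsum]
  have hG : (∑ j ∈ Finset.range m, j) * 2 = m * (m - 1) := Finset.sum_range_id_mul_two m
  obtain ⟨m', rfl⟩ : ∃ m', m = m' + 1 := ⟨m - 1, by omega⟩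
  set S := ∑ j ∈ Finset.range (m' + 1), j with hS
  have key : (p + 2) * (p + 1) = 18 * S + 6 * (m' + 1) := by
    have hp : p = 3 * m' + 1 := by omega
    rw [hp]
    simp only [Nat.add_sub_cancel] at hG
    nlinarith [hG]
  omega

end Stmt10Aux2

open Stmt10Aux Stmt10Aux2 in
/-- The numerical semigroup generated by `{q, q+1} ∪ {(q-1) + j(q-2) : 0 ≤ j ≤ m-1}`
(with `q = 3^t`, `m = q/3`) has exactly `q(q-1)/6` gaps.  This is the Weierstrass
semigroup at the rational places `P` of `Z₃` with `β(P) = 1`. -/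
theorem stmt_10 (t : ℕ) (ht : 1 ≤ t) (q : ℕ) (hq : q = 3 ^ t) (m : ℕ) (hm : m = q / 3) :
    {n : ℕ | n ∉ AddSubmonoid.closure
      (({q, q + 1} : Set ℕ) ∪ {n : ℕ | ∃ j : ℕ, j < m ∧ n = (q - 1) + j * (q - 2)})}.Finite ∧
    {n : ℕ | n ∉ AddSubmonoid.closure
      (({q, q + 1} : Set ℕ) ∪ {n : ℕ | ∃ j : ℕ, j < m ∧ n = (q - 1) + j * (q - 2)})}.ncard
      = q * (q - 1) / 6 := by
  have hq3m : q = 3 * 3 ^ (t - 1) := by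
    rw [hq]
    conv_lhs => rw [show t = (t - 1) + 1 from by omega]
    rw [pow_succ']
  have hmval : m = 3 ^ (t - 1) := by rw [hm, hq3m]; omega
  have hm1 : 1 ≤ m := by rw [hmval]; exact Nat.one_le_pow _ _ (by norm_num)
  have hq3 : q = 3 * m := by rw [hq3m, hmval]
  obtain ⟨p, hpq⟩ : ∃ p, q = p + 2 := ⟨q - 2, by omega⟩
  have h1 : q - 1 = p + 1 := by omega
  have h2 : q - 2 = p := by omega
  have h3 : q + 1 = p + 3 := by omega
  have hq3' : p + 2 = 3 * m := by omega
  have hset : (({q, q + 1} : Set ℕ) ∪ {n : ℕ | ∃ j : ℕ, j < m ∧ n = (q - 1) + j * (q - 2)})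
      = Gset p m := by
    rw [h3, h1, h2, hpq]
    rfl
  rw [hset, h1, hpq]
  have hgaps : {n : ℕ | n ∉ AddSubmonoid.closure (Gset p m)} =
      ↑((Finset.range m).biUnion (fun k => Finset.Ico (k*(p+3)+1) ((k+1)*p+1))) := by
    ext n
    simp only [Set.mem_setOf_eq, Finset.coe_biUnion, Set.mem_iUnion, Finset.mem_coe,
      Finset.mem_Ico, Finset.mem_range]
    constructor
    · intro hn
      by_contra hc
      push_neg at hc
      refine hn (T_sub_closure p m hm1 hq3' n (fun k hk hcon => ?_))
      have := hc k hk
      omega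
    · rintro ⟨k, hk, hn1, hn2⟩ hmem
      exact closure_sub_Tmon p m hmem k hk ⟨by omega, by omega⟩
  constructor
  · rw [hgaps]; exact Finset.finite_toSet _
  · rw [hgaps, Set.ncard_coe_finset]; exact card_lemma p m hm1 hq3'
end

section
/- For every integer j ≥ 2 one has 𝒫_2·𝒫_{j−1}·𝒫_j·𝒬_1 + 𝒫_2·𝒫_{j−1}·𝒬_j − 𝒫_{j−1}·𝒫_j·𝒬_2 − 𝒫_2·𝒫_j·𝒬_{j−1} = s²·(s−1)²·𝒫_{j−2}·𝒫_{j+1}. -/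
theorem stmt_12 {K : Type*} [Field K] [CharP K 3]
    (s : K) (hs0 : s ≠ 0) (hs1 : s ≠ 1)
    (P Q R : ℕ → K)
    (hP0 : P 0 = 0) (hP1 : P 1 = 1)
    (hQ0 : Q 0 = (s * (s - 1))⁻¹) (hQ1 : Q 1 = s)
    (hR0 : R 0 = -(s ^ 2)⁻¹) (hR1 : R 1 = -(s + 1))
    (hPrec : ∀ j : ℕ, 1 ≤ j → P (j + 1) = -s ^ 3 * P j - (s * (s - 1)) ^ 3 * P (j - 1))
    (hQrec : ∀ j : ℕ, 1 ≤ j → Q (j + 1) = -s ^ 3 * Q j - (s * (s - 1)) ^ 3 * Q (j - 1))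
    (hRrec : ∀ j : ℕ, 1 ≤ j → R (j + 1) = -s ^ 3 * R j - (s * (s - 1)) ^ 3 * R (j - 1)) :
    ∀ j : ℕ, 2 ≤ j →
      P 2 * P (j - 1) * P j * Q 1 + P 2 * P (j - 1) * Q j
        - P (j - 1) * P j * Q 2 - P 2 * P j * Q (j - 1)
      = s ^ 2 * (s - 1) ^ 2 * P (j - 2) * P (j + 1) := by
  have hs1' : s - 1 ≠ 0 := sub_ne_zero.mpr hs1
  -- Cassini-type identity
  have hCgen : ∀ k : ℕ, P (k+1) ^ 2 - P k * P (k+2) = (s * (s-1)) ^ (3*k) := by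
    intro k
    induction k with
    | zero => simp [hP0, hP1]
    | succ k ih =>
      have h2 : P (k+2) = -s ^ 3 * P (k+1) - (s * (s-1)) ^ 3 * P k := by
        have h := hPrec (k+1) (by omega)
        simpa using h
      have h3 : P (k+3) = -s ^ 3 * P (k+2) - (s * (s-1)) ^ 3 * P (k+1) := by
        have h := hPrec (k+2) (by omega)
        simpa using h
      rw [h3]
      linear_combination (s * (s-1)) ^ 3 * ih + P (k+2) * h2
  -- Wronskian-type identity
  have hWgen : ∀ k : ℕ, P k * Q (k+1) - P (k+1) * Q k = -(s * (s-1)) ^ (3*k) * Q 0 := by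
    intro k
    induction k with
    | zero => simp [hP0, hP1]
    | succ k ih =>
      have h2p : P (k+2) = -s ^ 3 * P (k+1) - (s * (s-1)) ^ 3 * P k := by
        have h := hPrec (k+1) (by omega)
        simpa using h
      have h2q : Q (k+2) = -s ^ 3 * Q (k+1) - (s * (s-1)) ^ 3 * Q k := by
        have h := hQrec (k+1) (by omega)
        simpa using h
      rw [h2p, h2q]
      linear_combination (s * (s-1)) ^ 3 * ih
  intro j hj
  obtain ⟨k, rfl⟩ : ∃ k, j = k + 2 := ⟨j - 2, by omega⟩
  simp only [show k + 2 - 1 = k + 1 from rfl, show k + 2 - 2 = k from rfl]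
  have hU : s * (s - 1) * Q 0 = 1 := by
    rw [hQ0]
    field_simp
  have hP2v : P 2 = -s ^ 3 := by
    have h := hPrec 1 le_rfl
    norm_num [hP0, hP1] at h
    linear_combination h
  have hQ2v : Q 2 = -s ^ 3 * s - (s * (s-1)) ^ 3 * Q 0 := by
    have h := hQrec 1 le_rfl
    norm_num [hQ1] at h
    linear_combination h
  have hp2 : P (k+2) = -s ^ 3 * P (k+1) - (s * (s-1)) ^ 3 * P k := by
    have h := hPrec (k+1) (by omega)
    simpa using h
  have hp3 : P (k+3) = -s ^ 3 * P (k+2) - (s * (s-1)) ^ 3 * P (k+1) := by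
    have h := hPrec (k+2) (by omega)
    simpa using h
  have hq2 : Q (k+2) = -s ^ 3 * Q (k+1) - (s * (s-1)) ^ 3 * Q k := by
    have h := hQrec (k+1) (by omega)
    simpa using h
  have hC := hCgen k
  have hW := hWgen k
  rw [hp2] at hC
  rw [hP2v, hQ1, hQ2v, hp3, hq2, hp2]
  linear_combination (-s ^ 3 * (s * (s-1)) ^ 2) * hC + (-s ^ 3 * (s * (s-1)) ^ 3) * hW +
    (-s ^ 3 * (s * (s-1)) ^ 2 * (P (k+1)) ^ 2 - (s * (s-1)) ^ 5 * P k * P (k+1)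
      + s ^ 3 * (s * (s-1)) ^ 2 * (s * (s-1)) ^ (3*k)) * hU
end

section
/- For every integer j ≥ 2 one has 𝒫_{j−1}·𝒫_2·𝒬_j·𝒬_1 − 𝒫_j·𝒬_{j−1}·𝒬_2 = s²·(s−1)²·𝒫_{j−2}·𝒬_{j+1}. -/
theorem stmt_13 {K : Type*} [Field K] [CharP K 3]
    (s : K) (hs0 : s ≠ 0) (hs1 : s ≠ 1)
    (P Q R : ℕ → K)
    (hP0 : P 0 = 0) (hP1 : P 1 = 1)
    (hQ0 : Q 0 = (s * (s - 1))⁻¹) (hQ1 : Q 1 = s)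
    (hR0 : R 0 = -(s ^ 2)⁻¹) (hR1 : R 1 = -(s + 1))
    (hPrec : ∀ j : ℕ, 1 ≤ j → P (j + 1) = -s ^ 3 * P j - (s * (s - 1)) ^ 3 * P (j - 1))
    (hQrec : ∀ j : ℕ, 1 ≤ j → Q (j + 1) = -s ^ 3 * Q j - (s * (s - 1)) ^ 3 * Q (j - 1))
    (hRrec : ∀ j : ℕ, 1 ≤ j → R (j + 1) = -s ^ 3 * R j - (s * (s - 1)) ^ 3 * R (j - 1)) :
    ∀ j : ℕ, 2 ≤ j →
      P (j - 1) * P 2 * Q j * Q 1 - P j * Q (j - 1) * Q 2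
      = s ^ 2 * (s - 1) ^ 2 * P (j - 2) * Q (j + 1) := by
  have hss : s * (s - 1) ≠ 0 := mul_ne_zero hs0 (sub_ne_zero.mpr hs1)
  have key : ∀ k : ℕ, Q (k + 1) = s * P (k + 1) - (s * (s - 1)) ^ 2 * P k ∧
      Q (k + 2) = s * P (k + 2) - (s * (s - 1)) ^ 2 * P (k + 1) := by
    intro k
    induction k with
    | zero =>
      constructor
      · rw [hQ1, hP1, hP0]; ring
      · have hq : Q 2 = -s ^ 3 * Q 1 - (s * (s - 1)) ^ 3 * Q 0 := hQrec 1 le_rfl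
        have hp : P 2 = -s ^ 3 * P 1 - (s * (s - 1)) ^ 3 * P 0 := hPrec 1 le_rfl
        rw [hq, hp, hQ0, hQ1, hP0, hP1]
        field_simp
        ring
    | succ n ih =>
      refine ⟨ih.2, ?_⟩
      have hq : Q (n + 3) = -s ^ 3 * Q (n + 2) - (s * (s - 1)) ^ 3 * Q (n + 1) :=
        hQrec (n + 2) (by omega)
      have hp : P (n + 3) = -s ^ 3 * P (n + 2) - (s * (s - 1)) ^ 3 * P (n + 1) :=
        hPrec (n + 2) (by omega)
      have hp2 : P (n + 2) = -s ^ 3 * P (n + 1) - (s * (s - 1)) ^ 3 * P n :=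
        hPrec (n + 1) (by omega)
      rw [hq, hp, ih.1, ih.2, hp2]; ring
  intro j hj
  obtain ⟨k, rfl⟩ : ∃ k, j = k + 2 := ⟨j - 2, by omega⟩
  have e1 : k + 2 - 1 = k + 1 := rfl
  have e2 : k + 2 - 2 = k := rfl
  rw [e1, e2]
  have hP2 : P 2 = -s ^ 3 * P 1 - (s * (s - 1)) ^ 3 * P 0 := hPrec 1 le_rfl
  have hPk2 : P (k + 2) = -s ^ 3 * P (k + 1) - (s * (s - 1)) ^ 3 * P k :=
    hPrec (k + 1) (by omega)
  have hPk3 : P (k + 3) = -s ^ 3 * P (k + 2) - (s * (s - 1)) ^ 3 * P (k + 1) :=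
    hPrec (k + 2) (by omega)
  have hQ2 : Q 2 = s * P 2 - (s * (s - 1)) ^ 2 * P 1 := (key 0).2
  rw [(key (k + 1)).2, (key k).1, (key k).2, hQ2, hQ1, hPk3, hPk2, hP2, hP0, hP1]
  ring
end

section
/- Let n ≥ 3 be an integer and suppose 𝒫_j ≠ 0 for all 1 ≤ j ≤ n−2. Define power series f_0, f_1, …, f_n ∈ K⟦T⟧ by f_0 = X − Y, f_1 = f_0 − X² − (β+1)·X·f_0 + (β²−β−1)·f_0², f_2 = (β²−β)·f_0·f_1 + β³·f_0²·X + f_1 + β²·f_0³, and for 3 ≤ j ≤ n, f_j = (−β³·𝒫_{j−1}·f_0·f_{j−1} − 𝒫_j·f_1·f_{j−2}) / (β²·(β−1)²·𝒫_{j−2}). Then for every j with 0 ≤ j ≤ n one has f_j ≡ 𝒫_{j+1}·T^{3j+2} + 𝒬_{j+1}·T^{3j+3} (mod T^q). -/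
/-!
Modulo `T^q`, each `f_j` is obtained from `X ≡ T + T²` and `Y ≡ T - βT³` by ring operations and
division by nonzero constants, so it suffices that the claimed values
`g_j = 𝒫_{j+1} T^{3j+2} + 𝒬_{j+1} T^{3j+3}` satisfy the defining relations exactly. For `j ≤ 2`
this is a direct computation in characteristic 3. In the recursive step the coefficient of
`T^{3j+1}` cancels, and those of `T^{3j+2}, T^{3j+3}` reduce to two quadratic identities in `𝒫, 𝒬`;
these follow because, for two solutions `u, v` of the recurrence, `u_j v_{j+k+1} - u_{j+1} v_{j+k}`
gets multiplied by `(β(β-1))³` at each step.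
-/

open PowerSeries

theorem casoratian_eq {R : Type*} [CommRing R] {a b : R} {u v : ℕ → R}
    (hu : ∀ j, u (j + 2) = a * u (j + 1) - b * u j)
    (hv : ∀ j, v (j + 2) = a * v (j + 1) - b * v j) (k j : ℕ) :
    u j * v (j + k + 1) - u (j + 1) * v (j + k) = b ^ j * (u 0 * v (k + 1) - u 1 * v k) := by
  induction j with
  | zero => simp
  | succ j ih =>
    rw [show j + 1 + k + 1 = j + k + 2 by omega, show j + 1 + k = j + k + 1 by omega, hv, hu,
      pow_succ]
    linear_combination b * ih

theorem PowerSeries.mk_X_pow_eq_mk_iff {R : Type*} [CommRing R] {q : ℕ} {A B : PowerSeries R} :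
    Ideal.Quotient.mk (Ideal.span {X ^ q}) A = Ideal.Quotient.mk (Ideal.span {X ^ q}) B ↔
      ∀ k < q, coeff k A = coeff k B := by
  simp only [Ideal.Quotient.eq, Ideal.mem_span_singleton, X_pow_dvd_iff, map_sub, sub_eq_zero]

section

variable {K : Type*} [Field K]

noncomputable def twoTerm (P Q : ℕ → K) (j : ℕ) : PowerSeries K :=
  C (P (j + 1)) * X ^ (3 * j + 2) + C (Q (j + 1)) * X ^ (3 * j + 3)

structure IsPQ (β : K) (P Q : ℕ → K) : Prop where
  P_zero : P 0 = 0
  P_one : P 1 = 1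
  Q_one : Q 1 = β
  Q_two : Q 2 = -β ^ 4 - (β * (β - 1)) ^ 2
  P_rec : ∀ j, P (j + 2) = -β ^ 3 * P (j + 1) - (β * (β - 1)) ^ 3 * P j
  Q_rec : ∀ j, Q (j + 2) = -β ^ 3 * Q (j + 1) - (β * (β - 1)) ^ 3 * Q j

namespace IsPQ

variable {β : K} {P Q : ℕ → K}

theorem of_Q_zero (hc : β * (β - 1) ≠ 0) (hP0 : P 0 = 0) (hP1 : P 1 = 1)
    (hQ0 : Q 0 = (β * (β - 1))⁻¹) (hQ1 : Q 1 = β)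
    (hPrec : ∀ j : ℕ, 1 ≤ j → P (j + 1) = -β ^ 3 * P j - (β * (β - 1)) ^ 3 * P (j - 1))
    (hQrec : ∀ j : ℕ, 1 ≤ j → Q (j + 1) = -β ^ 3 * Q j - (β * (β - 1)) ^ 3 * Q (j - 1)) :
    IsPQ β P Q where
  P_zero := hP0
  P_one := hP1
  Q_one := hQ1
  Q_two := by
    rw [hQrec 1 le_rfl, hQ1, Nat.sub_self, hQ0]
    linear_combination -(β * (β - 1)) ^ 2 * mul_inv_cancel₀ hc
  P_rec j := hPrec (j + 1) le_add_self
  Q_rec j := hQrec (j + 1) le_add_self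

theorem P_two (h : IsPQ β P Q) : P 2 = -β ^ 3 := by
  rw [h.P_rec 0, h.P_one, h.P_zero]
  ring

theorem twoTerm_zero (h : IsPQ β P Q) : twoTerm P Q 0 = X ^ 2 + C β * X ^ 3 := by
  simp [twoTerm, h.P_one, h.Q_one]

theorem twoTerm_one [CharP K 3] (h : IsPQ β P Q) :
    twoTerm P Q 1 = twoTerm P Q 0 - (X + X ^ 2) ^ 2 - C (β + 1) * (X + X ^ 2) * twoTerm P Q 0
      + C (β ^ 2 - β - 1) * twoTerm P Q 0 ^ 2 := by
  have h3 : (3 : PowerSeries K) = 0 := by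
    rw [← map_ofNat C 3, CharP.ofNat_eq_zero, map_zero]
  rw [h.twoTerm_zero]
  simp only [twoTerm, Nat.reduceAdd, Nat.reduceMul, h.P_two, h.Q_two, map_add, map_sub, map_neg,
    map_mul, map_pow, map_one]
  linear_combination (X ^ 3 + X ^ 4 + C β * X ^ 4 + C β * X ^ 5 + C β ^ 2 * X ^ 5
    - C β ^ 3 * X ^ 5 + C β ^ 3 * X ^ 6 - C β ^ 4 * X ^ 6) * h3

theorem twoTerm_two [CharP K 3] (h : IsPQ β P Q) :
    twoTerm P Q 2 = C (β ^ 2 - β) * (twoTerm P Q 0 * twoTerm P Q 1)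
      + C (β ^ 3) * (twoTerm P Q 0 ^ 2 * (X + X ^ 2)) + twoTerm P Q 1
      + C (β ^ 2) * twoTerm P Q 0 ^ 3 := by
  have h3 : (3 : PowerSeries K) = 0 := by
    rw [← map_ofNat C 3, CharP.ofNat_eq_zero, map_zero]
  rw [h.twoTerm_zero]
  simp only [twoTerm, Nat.reduceAdd, Nat.reduceMul, h.P_rec 1, h.Q_rec 1, h.P_one, h.Q_one,
    h.P_two, h.Q_two, map_sub, map_neg, map_mul, map_pow, map_one]
  linear_combination (-C β ^ 3 * X ^ 6 - C β ^ 3 * X ^ 7 - C β ^ 4 * X ^ 7 - C β ^ 4 * X ^ 8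
    - C β ^ 5 * X ^ 8 + C β ^ 6 * X ^ 8 - C β ^ 6 * X ^ 9 + C β ^ 7 * X ^ 9) * h3

theorem twoTerm_step (h : IsPQ β P Q) (i : ℕ) :
    C (β ^ 2 * (β - 1) ^ 2 * P (i + 1)) * twoTerm P Q (i + 3) =
      -C (β ^ 3 * P (i + 2)) * (twoTerm P Q 0 * twoTerm P Q (i + 2))
        - C (P (i + 3)) * (twoTerm P Q 1 * twoTerm P Q (i + 1)) := by
  have hPP := casoratian_eq h.P_rec h.P_rec 2 (i + 1)
  have hPQ := casoratian_eq h.P_rec h.Q_rec 2 (i + 1)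
  have hW := casoratian_eq (u := fun j ↦ P (j + 1)) (v := fun j ↦ Q (j + 1))
    (fun j ↦ h.P_rec (j + 1)) (fun j ↦ h.Q_rec (j + 1)) 0 (i + 1)
  simp only [h.P_zero, h.P_one, h.Q_one, h.P_two, h.Q_two, zero_mul, zero_sub, add_zero,
    add_assoc, Nat.reduceAdd] at hPP hPQ hW
  have hA : β ^ 2 * (β - 1) ^ 2 * (P (i + 1) * P (i + 4)) =
      β ^ 3 * (P (i + 3) * Q (i + 2) - P (i + 2) * Q (i + 3))
        + β ^ 2 * (β - 1) ^ 2 * (P (i + 2) * P (i + 3)) := by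
    linear_combination (β * (β - 1)) ^ 2 * hPP + β ^ 3 * hW
  have hB : β ^ 2 * (β - 1) ^ 2 * (P (i + 1) * Q (i + 4)) =
      β ^ 4 * (P (i + 3) * Q (i + 2) - P (i + 2) * Q (i + 3))
        + β ^ 2 * (β - 1) ^ 2 * (P (i + 3) * Q (i + 2)) := by
    linear_combination (β * (β - 1)) ^ 2 * hPQ + (β ^ 4 + (β * (β - 1)) ^ 2) * hW
  replace hA := congrArg C hA
  replace hB := congrArg C hB
  rw [h.twoTerm_zero]
  simp only [twoTerm, h.P_two, h.Q_two, add_assoc, Nat.reduceAdd, map_add, map_sub, map_neg,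
    map_mul, map_pow, map_one] at hA hB ⊢
  linear_combination X ^ (3 * i + 11) * hA + X ^ (3 * i + 12) * hB

section Congruence

variable {R : Type*} [Ring R] (φ : PowerSeries K →+* R) {f : ℕ → PowerSeries K}

theorem map_eq_twoTerm_of_le_two [CharP K 3] (h : IsPQ β P Q) {X₀ Y₀ : PowerSeries K}
    (hX : φ X₀ = φ (X + X ^ 2)) (hY : φ Y₀ = φ (X - C β * X ^ 3)) (hf0 : f 0 = X₀ - Y₀)
    (hf1 : f 1 = f 0 - X₀ ^ 2 - C (β + 1) * X₀ * f 0 + C (β ^ 2 - β - 1) * f 0 ^ 2)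
    (hf2 : f 2 = C (β ^ 2 - β) * (f 0 * f 1) + C (β ^ 3) * (f 0 ^ 2 * X₀)
      + f 1 + C (β ^ 2) * f 0 ^ 3) :
    ∀ j ≤ 2, φ (f j) = φ (twoTerm P Q j) := by
  have h0 : φ (f 0) = φ (twoTerm P Q 0) := by
    rw [hf0, map_sub, hX, hY, ← map_sub, h.twoTerm_zero]
    congr 1
    ring
  have h1 : φ (f 1) = φ (twoTerm P Q 1) := by
    rw [hf1, h.twoTerm_one]
    simp only [map_add, map_sub, map_mul, map_pow, hX, h0]
  have h2 : φ (f 2) = φ (twoTerm P Q 2) := by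
    rw [hf2, h.twoTerm_two]
    simp only [map_add, map_mul, map_pow, hX, h0, h1]
  intro j hj
  interval_cases j
  exacts [h0, h1, h2]

theorem map_eq_twoTerm_step (h : IsPQ β P Q) {i : ℕ}
    (hd : β ^ 2 * (β - 1) ^ 2 * P (i + 1) ≠ 0)
    (hf : f (i + 3) = (-C (β ^ 3 * P (i + 2)) * (f 0 * f (i + 2))
      - C (P (i + 3)) * (f 1 * f (i + 1))) * (C (β ^ 2 * (β - 1) ^ 2 * P (i + 1)))⁻¹)
    (h0 : φ (f 0) = φ (twoTerm P Q 0)) (h1 : φ (f 1) = φ (twoTerm P Q 1))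
    (hi1 : φ (f (i + 1)) = φ (twoTerm P Q (i + 1)))
    (hi2 : φ (f (i + 2)) = φ (twoTerm P Q (i + 2))) :
    φ (f (i + 3)) = φ (twoTerm P Q (i + 3)) := by
  calc φ (f (i + 3))
      = φ (C (β ^ 2 * (β - 1) ^ 2 * P (i + 1)) * twoTerm P Q (i + 3)
          * (C (β ^ 2 * (β - 1) ^ 2 * P (i + 1)))⁻¹) := by
        rw [hf, h.twoTerm_step]
        simp only [map_mul, map_sub, map_neg, h0, h1, hi1, hi2]
    _ = φ (twoTerm P Q (i + 3)) := by
        rw [C_inv, mul_right_comm, ← map_mul, mul_inv_cancel₀ hd, map_one, one_mul]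

end Congruence

end IsPQ

end

theorem stmt_14_general {K : Type*} [Field K] [CharP K 3]
    (q : ℕ)
    (β : K) (hβ0 : β ≠ 0) (hβ1 : β ≠ 1)
    (P Q : ℕ → K)
    (hP0 : P 0 = 0) (hP1 : P 1 = 1)
    (hQ0 : Q 0 = (β * (β - 1))⁻¹) (hQ1 : Q 1 = β)
    (hPrec : ∀ j : ℕ, 1 ≤ j → P (j + 1) = -β ^ 3 * P j - (β * (β - 1)) ^ 3 * P (j - 1))
    (hQrec : ∀ j : ℕ, 1 ≤ j → Q (j + 1) = -β ^ 3 * Q j - (β * (β - 1)) ^ 3 * Q (j - 1))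
    (n : ℕ)
    (hPne : ∀ j : ℕ, 1 ≤ j → j ≤ n - 2 → P j ≠ 0)
    (X Y : PowerSeries K)
    (hX : ∀ k : ℕ, k < q → coeff k X =
      coeff k (PowerSeries.X + PowerSeries.X ^ 2))
    (hY : ∀ k : ℕ, k < q → coeff k Y =
      coeff k (PowerSeries.X - C β * PowerSeries.X ^ 3))
    (f : ℕ → PowerSeries K)
    (hf0 : f 0 = X - Y)
    (hf1 : f 1 = f 0 - X ^ 2 - C (β + 1) * X * f 0 + C (β ^ 2 - β - 1) * f 0 ^ 2)
    (hf2 : f 2 = C (β ^ 2 - β) * (f 0 * f 1) + C (β ^ 3) * (f 0 ^ 2 * X)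
      + f 1 + C (β ^ 2) * f 0 ^ 3)
    (hfj : ∀ j : ℕ, 3 ≤ j → j ≤ n →
      f j = (-C (β ^ 3 * P (j - 1)) * (f 0 * f (j - 1)) - C (P j) * (f 1 * f (j - 2)))
        * (C (β ^ 2 * (β - 1) ^ 2 * P (j - 2)))⁻¹) :
    ∀ j : ℕ, j ≤ n → ∀ k : ℕ, k < q →
      coeff k (f j) =
        coeff k (C (P (j + 1)) * PowerSeries.X ^ (3 * j + 2)
          + C (Q (j + 1)) * PowerSeries.X ^ (3 * j + 3)) := by
  have h := IsPQ.of_Q_zero (mul_ne_zero hβ0 (sub_ne_zero.mpr hβ1)) hP0 hP1 hQ0 hQ1 hPrec hQrec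
  let φ := Ideal.Quotient.mk (Ideal.span {(PowerSeries.X : PowerSeries K) ^ q})
  have init := h.map_eq_twoTerm_of_le_two φ (mk_X_pow_eq_mk_iff.mpr hX)
    (mk_X_pow_eq_mk_iff.mpr hY) hf0 hf1 hf2
  suffices ∀ j ≤ n, φ (f j) = φ (twoTerm P Q j) from fun j hj ↦ mk_X_pow_eq_mk_iff.mp (this j hj)
  intro j
  induction j using Nat.strong_induction_on with
  | _ j ih =>
    intro hj
    rcases le_or_gt j 2 with hj2 | hj2
    · exact init j hj2
    obtain ⟨i, rfl⟩ : ∃ i, j = i + 3 := ⟨j - 3, by omega⟩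
    have hd : β ^ 2 * (β - 1) ^ 2 * P (i + 1) ≠ 0 := by
      have := hPne (i + 1) (by omega) (by omega)
      have := sub_ne_zero.mpr hβ1
      positivity
    exact h.map_eq_twoTerm_step φ hd (hfj (i + 3) (by omega) hj) (init 0 (by omega))
      (init 1 (by omega)) (ih (i + 1) (by omega) (by omega)) (ih (i + 2) (by omega) (by omega))

/-- Theorem 2.12 (`thm:fi`, power-series form): the recursively defined series
`f_j` satisfy `f_j ≡ 𝒫_{j+1} T^{3j+2} + 𝒬_{j+1} T^{3j+3} (mod T^q)` for `0 ≤ j ≤ n`. -/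
theorem stmt_14 {K : Type*} [Field K] [CharP K 3]
    (t : ℕ) (ht : 1 ≤ t) (q : ℕ) (hq : q = 3 ^ t)
    (β : K) (hβ0 : β ≠ 0) (hβ1 : β ≠ 1)
    (P Q : ℕ → K)
    (hP0 : P 0 = 0) (hP1 : P 1 = 1)
    (hQ0 : Q 0 = (β * (β - 1))⁻¹) (hQ1 : Q 1 = β)
    (hPrec : ∀ j : ℕ, 1 ≤ j → P (j + 1) = -β ^ 3 * P j - (β * (β - 1)) ^ 3 * P (j - 1))
    (hQrec : ∀ j : ℕ, 1 ≤ j → Q (j + 1) = -β ^ 3 * Q j - (β * (β - 1)) ^ 3 * Q (j - 1))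
    (n : ℕ) (hn : 3 ≤ n)
    (hPne : ∀ j : ℕ, 1 ≤ j → j ≤ n - 2 → P j ≠ 0)
    (X Y : PowerSeries K)
    (hX : ∀ k : ℕ, k < q → coeff k X =
      coeff k (PowerSeries.X + PowerSeries.X ^ 2))
    (hY : ∀ k : ℕ, k < q → coeff k Y =
      coeff k (PowerSeries.X - C β * PowerSeries.X ^ 3))
    (f : ℕ → PowerSeries K)
    (hf0 : f 0 = X - Y)
    (hf1 : f 1 = f 0 - X ^ 2 - C (β + 1) * X * f 0 + C (β ^ 2 - β - 1) * f 0 ^ 2)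
    (hf2 : f 2 = C (β ^ 2 - β) * (f 0 * f 1) + C (β ^ 3) * (f 0 ^ 2 * X)
      + f 1 + C (β ^ 2) * f 0 ^ 3)
    (hfj : ∀ j : ℕ, 3 ≤ j → j ≤ n →
      f j = (-C (β ^ 3 * P (j - 1)) * (f 0 * f (j - 1)) - C (P j) * (f 1 * f (j - 2)))
        * (C (β ^ 2 * (β - 1) ^ 2 * P (j - 2)))⁻¹) :
    ∀ j : ℕ, j ≤ n → ∀ k : ℕ, k < q →
      coeff k (f j) =
        coeff k (C (P (j + 1)) * PowerSeries.X ^ (3 * j + 2)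
          + C (Q (j + 1)) * PowerSeries.X ^ (3 * j + 3)) :=
  stmt_14_general q β hβ0 hβ1 P Q hP0 hP1 hQ0 hQ1 hPrec hQrec n hPne X Y hX hY f hf0 hf1 hf2 hfj
end

section
/- Let L ≥ 1 be an integer and suppose 𝒫_ℓ ≠ 0 for all 1 ≤ ℓ ≤ L. With f_0, f_1, …, f_L as above, define power series g_0, g_1, …, g_L ∈ K⟦T⟧ by g_0 = X² − f_0 and, for 1 ≤ ℓ ≤ L, g_ℓ = (𝒫_{ℓ+1}·g_{ℓ−1}·f_0 − ℛ_ℓ·f_ℓ) / (𝒫_ℓ·β). Then for every ℓ with 0 ≤ ℓ ≤ L one has g_ℓ ≡ ℛ_{ℓ+1}·T^{3ℓ+3} + 𝒫_{ℓ+1}·T^{3ℓ+4} (mod T^q). -/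
/-!
Work in `K⟦T⟧ ⧸ (T ^ q)`, where the congruences become equalities and which has characteristic
`3` once `q ≠ 0`. By uniqueness of solutions of the common recursion,
`ℛ (n + 1) = -(β + 1) 𝒫 (n + 1) + β (β - 1)³ 𝒫 n`, and one first shows
`f j = 𝒫 (j + 1) T ^ (3j + 2) + 𝒬 (j + 1) T ^ (3j + 3)` by strong induction. After cancelling
the unit denominators, each step of the recursions for `f` and `g` is then a polynomial identity
in `T`, `β` and two consecutive values of `𝒫`; the one for `f j`, `j ≥ 3`, holds over any
commutative ring, the others only in characteristic `3`.
-/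

open PowerSeries

theorem PowerSeries.mk_span_X_pow_eq_iff {R : Type*} [CommRing R] {n : ℕ} {φ ψ : R⟦X⟧} :
    Ideal.Quotient.mk (Ideal.span {X ^ n}) φ = Ideal.Quotient.mk (Ideal.span {X ^ n}) ψ ↔
      ∀ m < n, coeff m φ = coeff m ψ := by
  simp only [Ideal.Quotient.eq, Ideal.mem_span_singleton, X_pow_dvd_iff, map_sub, sub_eq_zero]

theorem PowerSeries.charP_quotient_span_X_pow {K : Type*} [Field K] (p : ℕ) [CharP K p] {n : ℕ}
    (hn : n ≠ 0) : CharP (K⟦X⟧ ⧸ Ideal.span {(X : K⟦X⟧) ^ n}) p := by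
  have : Nontrivial (K⟦X⟧ ⧸ Ideal.span {(X : K⟦X⟧) ^ n}) := by
    refine Ideal.Quotient.nontrivial_iff.mpr fun h => ?_
    rw [Ideal.span_singleton_eq_top, isUnit_iff_constantCoeff] at h
    simp [hn] at h
  exact charP_of_injective_algebraMap' K p

theorem PowerSeries.mul_C_eq_of_eq_mul_inv_C {K : Type*} [Field K] {φ ψ : K⟦X⟧} {d : K}
    (hd : d ≠ 0) (h : φ = ψ * (C d)⁻¹) : φ * C d = ψ := by
  rw [h, C_inv, mul_assoc, ← map_mul, inv_mul_cancel₀ hd, map_one, mul_one]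

theorem eq_of_linear_recurrence {R : Type*} [CommRing R] {a c : R} {u v : ℕ → R}
    (hu : ∀ n, u (n + 2) = a * u (n + 1) + c * u n)
    (hv : ∀ n, v (n + 2) = a * v (n + 1) + c * v n)
    (h0 : u 0 = v 0) (h1 : u 1 = v 1) (n : ℕ) : u n = v n := by
  induction n using Nat.twoStepInduction with
  | zero => exact h0
  | one => exact h1
  | more n ih0 ih1 => rw [hu, hv, ih0, ih1]

section Recursion

variable {A : Type*} [CommRing A]

def IsBetaRecurrent (b : A) (u : ℕ → A) : Prop :=
  ∀ n, u (n + 2) = -b ^ 3 * u (n + 1) - (b * (b - 1)) ^ 3 * u n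

variable {b : A} {p r : ℕ → A}

theorem IsBetaRecurrent.map {B : Type*} [CommRing B] (φ : A →+* B) (hp : IsBetaRecurrent b p) :
    IsBetaRecurrent (φ b) (fun n => φ (p n)) := fun n => by
  simp only [hp n, map_sub, map_mul, map_neg, map_pow, map_one]

theorem IsBetaRecurrent.two (hp : IsBetaRecurrent b p) (hp0 : p 0 = 0) (hp1 : p 1 = 1) :
    p 2 = -b ^ 3 := by
  simpa [hp0, hp1] using hp 0

theorem IsBetaRecurrent.succ_eq_of_initial (hp : IsBetaRecurrent b p) (hp0 : p 0 = 0)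
    (hp1 : p 1 = 1) (hr : IsBetaRecurrent b r) (hr0 : b ^ 2 * r 0 = -1) (hr1 : r 1 = -(b + 1))
    (n : ℕ) :
    r (n + 1) = -(b + 1) * p (n + 1) + b * (b - 1) ^ 3 * p n := by
  refine eq_of_linear_recurrence (a := -b ^ 3) (c := -(b * (b - 1)) ^ 3)
    (u := fun n => r (n + 1)) (v := fun n => -(b + 1) * p (n + 1) + b * (b - 1) ^ 3 * p n)
    (fun n => ?_) (fun n => ?_) ?_ ?_ n
  · simp only [hr (n + 1)]
    ring
  · simp only [hp (n + 1), hp n]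
    ring
  · simp [hr1, hp0, hp1]
  · simp only [hr 0, hr1, hp.two hp0 hp1, hp1]
    linear_combination -(b * (b - 1) ^ 3) * hr0

/-- The coefficient of `T ^ (3 * j + 3)` is the paper's `𝒬 (j + 1)`. -/
def fLeading (b T : A) (p : ℕ → A) (j : ℕ) : A :=
  p (j + 1) * T ^ (3 * j + 2) + (b * p (j + 1) - (b * (b - 1)) ^ 2 * p j) * T ^ (3 * j + 3)

def gLeading (T : A) (p r : ℕ → A) (l : ℕ) : A :=
  r (l + 1) * T ^ (3 * l + 3) + p (l + 1) * T ^ (3 * l + 4)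

theorem map_fLeading {B : Type*} [CommRing B] (φ : A →+* B) (b T : A) (p : ℕ → A) (j : ℕ) :
    φ (fLeading b T p j) = fLeading (φ b) (φ T) (fun n => φ (p n)) j := by
  simp [fLeading]

theorem map_gLeading {B : Type*} [CommRing B] (φ : A →+* B) (T : A) (p r : ℕ → A) (l : ℕ) :
    φ (gLeading T p r l) = gLeading (φ T) (fun n => φ (p n)) (fun n => φ (r n)) l := by
  simp [gLeading]

variable {T x : A} {f g : ℕ → A} {L : ℕ}

theorem fLeading_zero (hp0 : p 0 = 0) (hp1 : p 1 = 1) : fLeading b T p 0 = T ^ 2 + b * T ^ 3 := by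
  simp [fLeading, hp0, hp1]

theorem fLeading_add_three (hp : IsBetaRecurrent b p) (hp0 : p 0 = 0) (hp1 : p 1 = 1) (m : ℕ) :
    -(b ^ 3 * p (m + 2)) * (fLeading b T p 0 * fLeading b T p (m + 2))
        - p (m + 3) * (fLeading b T p 1 * fLeading b T p (m + 1)) =
      fLeading b T p (m + 3) * (b ^ 2 * (b - 1) ^ 2 * p (m + 1)) := by
  have hp3 : p (m + 3) = _ := hp (m + 1)
  have hp4 : p (m + 4) = _ := hp (m + 2)
  simp only [fLeading, hp4, hp3, hp.two hp0 hp1, hp0, hp1]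
  ring

theorem gLeading_succ [CharP A 3] (hp : IsBetaRecurrent b p)
    (hr : ∀ n, r (n + 1) = -(b + 1) * p (n + 1) + b * (b - 1) ^ 3 * p n) (m : ℕ) :
    p (m + 2) * (gLeading T p r m * (T ^ 2 + b * T ^ 3)) - r (m + 1) * fLeading b T p (m + 1) =
      gLeading T p r (m + 1) * (p (m + 1) * b) := by
  have hp2 : p (m + 2) = _ := hp m
  simp only [gLeading, fLeading, hr (m + 1), hr m, hp2]
  rw [← sub_eq_zero]
  ring_nf
  reduce_mod_char!

theorem eq_fLeading [CharP A 3] (hp : IsBetaRecurrent b p) (hp0 : p 0 = 0) (hp1 : p 1 = 1)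
    (hb : IsUnit b) (hb1 : IsUnit (b - 1)) (hpu : ∀ j, 1 ≤ j → j ≤ L → IsUnit (p j))
    (hx : x = T + T ^ 2) (hf0 : f 0 = T ^ 2 + b * T ^ 3)
    (hf1 : f 1 = f 0 - x ^ 2 - (b + 1) * x * f 0 + (b ^ 2 - b - 1) * f 0 ^ 2)
    (hf2 : f 2 = (b ^ 2 - b) * (f 0 * f 1) + b ^ 3 * (f 0 ^ 2 * x) + f 1 + b ^ 2 * f 0 ^ 3)
    (hf : ∀ m, m + 3 ≤ L → f (m + 3) * (b ^ 2 * (b - 1) ^ 2 * p (m + 1)) =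
      -(b ^ 3 * p (m + 2)) * (f 0 * f (m + 2)) - p (m + 3) * (f 1 * f (m + 1))) :
    ∀ j ≤ L, f j = fLeading b T p j := by
  have hp2 := hp.two hp0 hp1
  have hf0' : f 0 = fLeading b T p 0 := hf0.trans (fLeading_zero hp0 hp1).symm
  have hf1' : f 1 = fLeading b T p 1 := by
    rw [hf1, hf0, hx]
    simp only [fLeading, hp2, hp1]
    rw [← sub_eq_zero]
    ring_nf
    reduce_mod_char!
  intro j hj
  induction j using Nat.strong_induction_on with
  | _ j ih =>
    match j, hj with
    | 0, _ => exact hf0'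
    | 1, _ => exact hf1'
    | 2, _ =>
      have hp3 : p 3 = _ := hp 1
      rw [hf2, hf1', hf0, hx]
      simp only [fLeading, hp3, hp2, hp1]
      rw [← sub_eq_zero]
      ring_nf
      reduce_mod_char!
    | m + 3, hj =>
      have hunit : IsUnit (b ^ 2 * (b - 1) ^ 2 * p (m + 1)) :=
        ((hb.pow 2).mul (hb1.pow 2)).mul (hpu (m + 1) (by omega) (by omega))
      rw [← hunit.mul_left_inj, hf m hj, hf0', hf1', ih (m + 2) (by omega) (by omega),
        ih (m + 1) (by omega) (by omega)]
      exact fLeading_add_three hp hp0 hp1 m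

theorem eq_gLeading [CharP A 3] (hp : IsBetaRecurrent b p) (hp0 : p 0 = 0) (hp1 : p 1 = 1)
    (hr : ∀ n, r (n + 1) = -(b + 1) * p (n + 1) + b * (b - 1) ^ 3 * p n)
    (hb : IsUnit b) (hpu : ∀ j, 1 ≤ j → j ≤ L → IsUnit (p j))
    (hx : x = T + T ^ 2) (hf : ∀ j ≤ L, f j = fLeading b T p j)
    (hg0 : g 0 = x ^ 2 - f 0)
    (hg : ∀ m, m + 1 ≤ L → g (m + 1) * (p (m + 1) * b) =
      p (m + 2) * (g m * f 0) - r (m + 1) * f (m + 1)) :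
    ∀ l ≤ L, g l = gLeading T p r l := by
  have hf0 : f 0 = T ^ 2 + b * T ^ 3 := (hf 0 (Nat.zero_le L)).trans (fLeading_zero hp0 hp1)
  intro l hl
  induction l with
  | zero =>
    rw [hg0, hf0, hx]
    simp only [gLeading, hr 0, hp0, hp1]
    rw [← sub_eq_zero]
    ring_nf
    reduce_mod_char!
  | succ m ih =>
    have hunit : IsUnit (p (m + 1) * b) := (hpu (m + 1) (by omega) hl).mul hb
    rw [← hunit.mul_left_inj, hg m hl, ih (by omega), hf0, hf (m + 1) hl]
    exact gLeading_succ hp hr m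

end Recursion

section ModXPow

variable {K : Type*} [Field K] {q L : ℕ} {β : K} {P R : ℕ → K} {x y : K⟦X⟧}
  {f g : ℕ → K⟦X⟧}

local notation "π" => Ideal.Quotient.mk (Ideal.span {(X : K⟦X⟧) ^ q})

theorem isUnit_mk_C {d : K} (hd : d ≠ 0) : IsUnit (π (C d)) :=
  hd.isUnit.map (RingHom.comp π C)

theorem mk_eq_fLeading [CharP K 3] (hq : q ≠ 0) (hβ0 : β ≠ 0) (hβ1 : β ≠ 1)
    (hP : IsBetaRecurrent β P) (hP0 : P 0 = 0) (hP1 : P 1 = 1)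
    (hPne : ∀ j, 1 ≤ j → j ≤ L → P j ≠ 0)
    (hx : ∀ k < q, coeff k x = coeff k (X + X ^ 2))
    (hy : ∀ k < q, coeff k y = coeff k (X - C β * X ^ 3))
    (hf0 : f 0 = x - y)
    (hf1 : f 1 = f 0 - x ^ 2 - C (β + 1) * x * f 0 + C (β ^ 2 - β - 1) * f 0 ^ 2)
    (hf2 : f 2 = C (β ^ 2 - β) * (f 0 * f 1) + C (β ^ 3) * (f 0 ^ 2 * x)
      + f 1 + C (β ^ 2) * f 0 ^ 3)
    (hfj : ∀ j, 3 ≤ j → j ≤ L →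
      f j = (-C (β ^ 3 * P (j - 1)) * (f 0 * f (j - 1)) - C (P j) * (f 1 * f (j - 2)))
        * (C (β ^ 2 * (β - 1) ^ 2 * P (j - 2)))⁻¹) :
    ∀ j ≤ L, π (f j) = π (fLeading (C β) X (fun n => C (P n)) j) := by
  have := charP_quotient_span_X_pow (K := K) 3 hq
  have hβ1' : β - 1 ≠ 0 := sub_ne_zero.mpr hβ1
  have hxπ : π x = π X + π X ^ 2 := by simpa using mk_span_X_pow_eq_iff.mpr hx
  have hyπ : π y = π X - π (C β) * π X ^ 3 := by simpa using mk_span_X_pow_eq_iff.mpr hy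
  have hfj' (m : ℕ) (hm : m + 3 ≤ L) : f (m + 3) * C (β ^ 2 * (β - 1) ^ 2 * P (m + 1)) =
      -C (β ^ 3 * P (m + 2)) * (f 0 * f (m + 2)) - C (P (m + 3)) * (f 1 * f (m + 1)) :=
    mul_C_eq_of_eq_mul_inv_C (by simp [hβ0, hβ1', hPne (m + 1) (by omega) (by omega)])
      (hfj (m + 3) (by omega) hm)
  intro j hj
  rw [map_fLeading]
  refine eq_fLeading (b := π (C β)) (p := fun n => π (C (P n))) (f := fun j => π (f j))
    (hP.map (RingHom.comp π C)) (by simp [hP0]) (by simp [hP1]) (isUnit_mk_C hβ0)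
    (by simpa using isUnit_mk_C hβ1') (fun j h1 h2 => isUnit_mk_C (hPne j h1 h2)) hxπ
    (by simp only [hf0, map_sub, hxπ, hyπ]; ring)
    (by simpa using congrArg π hf1) (by simpa using congrArg π hf2) (fun m hm => ?_) j hj
  simpa only [map_mul, map_neg, map_pow, map_sub, map_one] using congrArg π (hfj' m hm)

theorem mk_eq_gLeading [CharP K 3] (hq : q ≠ 0) (hβ0 : β ≠ 0)
    (hP : IsBetaRecurrent β P) (hP0 : P 0 = 0) (hP1 : P 1 = 1)
    (hR : ∀ n, R (n + 1) = -(β + 1) * P (n + 1) + β * (β - 1) ^ 3 * P n)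
    (hPne : ∀ j, 1 ≤ j → j ≤ L → P j ≠ 0)
    (hx : ∀ k < q, coeff k x = coeff k (X + X ^ 2))
    (hf : ∀ j ≤ L, π (f j) = π (fLeading (C β) X (fun n => C (P n)) j))
    (hg0 : g 0 = x ^ 2 - f 0)
    (hgl : ∀ l, 1 ≤ l → l ≤ L →
      g l = (C (P (l + 1)) * (g (l - 1) * f 0) - C (R l) * f l) * (C (P l * β))⁻¹) :
    ∀ l ≤ L, π (g l) = π (gLeading X (fun n => C (P n)) (fun n => C (R n)) l) := by
  have := charP_quotient_span_X_pow (K := K) 3 hq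
  have hxπ : π x = π X + π X ^ 2 := by simpa using mk_span_X_pow_eq_iff.mpr hx
  have hgl' (m : ℕ) (hm : m + 1 ≤ L) : g (m + 1) * C (P (m + 1) * β) =
      C (P (m + 2)) * (g m * f 0) - C (R (m + 1)) * f (m + 1) :=
    mul_C_eq_of_eq_mul_inv_C (mul_ne_zero (hPne (m + 1) (by omega) hm) hβ0)
      (hgl (m + 1) (by omega) hm)
  intro l hl
  rw [map_gLeading]
  refine eq_gLeading (b := π (C β)) (p := fun n => π (C (P n))) (f := fun j => π (f j))
    (g := fun j => π (g j)) (hP.map (RingHom.comp π C)) (by simp [hP0]) (by simp [hP1])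
    (fun n => ?_) (isUnit_mk_C hβ0) (fun j h1 h2 => isUnit_mk_C (hPne j h1 h2)) hxπ
    (fun j hj => (hf j hj).trans (map_fLeading _ _ _ _ _))
    (by simpa using congrArg π hg0) (fun m hm => ?_) l hl
  · simpa only [map_mul, map_neg, map_pow, map_sub, map_one, map_add, RingHom.comp_apply]
      using congrArg (RingHom.comp π C) (hR n)
  · simpa only [map_mul, map_neg, map_pow, map_sub, map_one] using congrArg π (hgl' m hm)

end ModXPow

theorem stmt_15_general {K : Type*} [Field K] [CharP K 3]
    (q : ℕ)
    (β : K) (hβ0 : β ≠ 0) (hβ1 : β ≠ 1)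
    (P R : ℕ → K)
    (hP0 : P 0 = 0) (hP1 : P 1 = 1)
    (hR0 : R 0 = -(β ^ 2)⁻¹) (hR1 : R 1 = -(β + 1))
    (hPrec : ∀ j : ℕ, 1 ≤ j → P (j + 1) = -β ^ 3 * P j - (β * (β - 1)) ^ 3 * P (j - 1))
    (hRrec : ∀ j : ℕ, 1 ≤ j → R (j + 1) = -β ^ 3 * R j - (β * (β - 1)) ^ 3 * R (j - 1))
    (L : ℕ)
    (hPne : ∀ ℓ : ℕ, 1 ≤ ℓ → ℓ ≤ L → P ℓ ≠ 0)
    (X Y : PowerSeries K)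
    (hX : ∀ k : ℕ, k < q → coeff k X =
      coeff k (PowerSeries.X + PowerSeries.X ^ 2))
    (hY : ∀ k : ℕ, k < q → coeff k Y =
      coeff k (PowerSeries.X - C β * PowerSeries.X ^ 3))
    (f : ℕ → PowerSeries K)
    (hf0 : f 0 = X - Y)
    (hf1 : f 1 = f 0 - X ^ 2 - C (β + 1) * X * f 0 + C (β ^ 2 - β - 1) * f 0 ^ 2)
    (hf2 : f 2 = C (β ^ 2 - β) * (f 0 * f 1) + C (β ^ 3) * (f 0 ^ 2 * X)
      + f 1 + C (β ^ 2) * f 0 ^ 3)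
    (hfj : ∀ j : ℕ, 3 ≤ j → j ≤ L →
      f j = (-C (β ^ 3 * P (j - 1)) * (f 0 * f (j - 1)) - C (P j) * (f 1 * f (j - 2)))
        * (C (β ^ 2 * (β - 1) ^ 2 * P (j - 2)))⁻¹)
    (g : ℕ → PowerSeries K)
    (hg0 : g 0 = X ^ 2 - f 0)
    (hgl : ∀ ℓ : ℕ, 1 ≤ ℓ → ℓ ≤ L →
      g ℓ = (C (P (ℓ + 1)) * (g (ℓ - 1) * f 0) - C (R ℓ) * f ℓ)
        * (C (P ℓ * β))⁻¹) :
    ∀ ℓ : ℕ, ℓ ≤ L → ∀ k : ℕ, k < q →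
      coeff k (g ℓ) =
        coeff k (C (R (ℓ + 1)) * PowerSeries.X ^ (3 * ℓ + 3)
          + C (P (ℓ + 1)) * PowerSeries.X ^ (3 * ℓ + 4)) := by
  intro ℓ hℓ k hk
  have hq : q ≠ 0 := by omega
  have hP : IsBetaRecurrent β P := fun n => hPrec (n + 1) n.succ_pos
  have hR : IsBetaRecurrent β R := fun n => hRrec (n + 1) n.succ_pos
  have hRP := hP.succ_eq_of_initial hP0 hP1 hR (by rw [hR0]; field_simp) hR1
  have hf := mk_eq_fLeading hq hβ0 hβ1 hP hP0 hP1 hPne hX hY hf0 hf1 hf2 hfj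
  exact mk_span_X_pow_eq_iff.mp
    (mk_eq_gLeading hq hβ0 hP hP0 hP1 hRP hPne hX hf hg0 hgl ℓ hℓ) k hk

/-- Proposition 2.13 (`prop:functions:gell`, power-series form): the recursively
defined series `g_ℓ` satisfy `g_ℓ ≡ ℛ_{ℓ+1} T^{3ℓ+3} + 𝒫_{ℓ+1} T^{3ℓ+4} (mod T^q)`
for `0 ≤ ℓ ≤ L`. -/
theorem stmt_15 {K : Type*} [Field K] [CharP K 3]
    (t : ℕ) (ht : 1 ≤ t) (q : ℕ) (hq : q = 3 ^ t)
    (β : K) (hβ0 : β ≠ 0) (hβ1 : β ≠ 1)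
    (P Q R : ℕ → K)
    (hP0 : P 0 = 0) (hP1 : P 1 = 1)
    (hQ0 : Q 0 = (β * (β - 1))⁻¹) (hQ1 : Q 1 = β)
    (hR0 : R 0 = -(β ^ 2)⁻¹) (hR1 : R 1 = -(β + 1))
    (hPrec : ∀ j : ℕ, 1 ≤ j → P (j + 1) = -β ^ 3 * P j - (β * (β - 1)) ^ 3 * P (j - 1))
    (hQrec : ∀ j : ℕ, 1 ≤ j → Q (j + 1) = -β ^ 3 * Q j - (β * (β - 1)) ^ 3 * Q (j - 1))
    (hRrec : ∀ j : ℕ, 1 ≤ j → R (j + 1) = -β ^ 3 * R j - (β * (β - 1)) ^ 3 * R (j - 1))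
    (L : ℕ) (hL : 1 ≤ L)
    (hPne : ∀ ℓ : ℕ, 1 ≤ ℓ → ℓ ≤ L → P ℓ ≠ 0)
    (X Y : PowerSeries K)
    (hX : ∀ k : ℕ, k < q → coeff k X =
      coeff k (PowerSeries.X + PowerSeries.X ^ 2))
    (hY : ∀ k : ℕ, k < q → coeff k Y =
      coeff k (PowerSeries.X - C β * PowerSeries.X ^ 3))
    (f : ℕ → PowerSeries K)
    (hf0 : f 0 = X - Y)
    (hf1 : f 1 = f 0 - X ^ 2 - C (β + 1) * X * f 0 + C (β ^ 2 - β - 1) * f 0 ^ 2)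
    (hf2 : f 2 = C (β ^ 2 - β) * (f 0 * f 1) + C (β ^ 3) * (f 0 ^ 2 * X)
      + f 1 + C (β ^ 2) * f 0 ^ 3)
    (hfj : ∀ j : ℕ, 3 ≤ j → j ≤ L →
      f j = (-C (β ^ 3 * P (j - 1)) * (f 0 * f (j - 1)) - C (P j) * (f 1 * f (j - 2)))
        * (C (β ^ 2 * (β - 1) ^ 2 * P (j - 2)))⁻¹)
    (g : ℕ → PowerSeries K)
    (hg0 : g 0 = X ^ 2 - f 0)
    (hgl : ∀ ℓ : ℕ, 1 ≤ ℓ → ℓ ≤ L →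
      g ℓ = (C (P (ℓ + 1)) * (g (ℓ - 1) * f 0) - C (R ℓ) * f ℓ)
        * (C (P ℓ * β))⁻¹) :
    ∀ ℓ : ℕ, ℓ ≤ L → ∀ k : ℕ, k < q →
      coeff k (g ℓ) =
        coeff k (C (R (ℓ + 1)) * PowerSeries.X ^ (3 * ℓ + 3)
          + C (P (ℓ + 1)) * PowerSeries.X ^ (3 * ℓ + 4)) :=
  stmt_15_general q β hβ0 hβ1 P R hP0 hP1 hR0 hR1 hPrec hRrec L hPne X Y hX hY f hf0 hf1 hf2 hfj g
    hg0 hgl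
end

section
/- Let t ≥ 1 be an integer and q = 3^t. Let K be a field of characteristic 3 and let a, b ∈ K satisfy a^q + a + p(b)² = 0, where p(b) = b + b³ + b⁹ + ⋯ + b^{3^{t−1}}. Set β = p(b)². Then (a^{q²} = a and b^{q²} = b) if and only if (β = 0 or β = 1 or β^{(q−1)/2} = −1). -/
/-- Lemma 2.2 (`lem:beta_rational`): a point `(a,b)` of the curve
`x^q + x + p(y)² = 0` (with `p(Y) = Σ_{i<t} Y^{3^i}`, `q = 3^t`) is
`𝔽_{q²}`-rational, i.e. `a^{q²} = a` and `b^{q²} = b`, if and only if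
`β = p(b)²` satisfies `β = 0`, `β = 1` or `β^{(q-1)/2} = -1`. -/
theorem stmt_16 {K : Type*} [Field K] [CharP K 3]
    (t : ℕ) (ht : 1 ≤ t) (q : ℕ) (hq : q = 3 ^ t)
    (a b : K)
    (hab : a ^ q + a + (∑ i ∈ Finset.range t, b ^ 3 ^ i) ^ 2 = 0)
    (β : K) (hβ : β = (∑ i ∈ Finset.range t, b ^ 3 ^ i) ^ 2) :
    (a ^ q ^ 2 = a ∧ b ^ q ^ 2 = b) ↔ (β = 0 ∨ β = 1 ∨ β ^ ((q - 1) / 2) = -1) := by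
  set s : K := ∑ i ∈ Finset.range t, b ^ 3 ^ i with hs
  have h3 : (3 : K) = 0 := by exact_mod_cast CharP.cast_eq_zero K 3
  have hq3 : 3 ≤ q := by
    subst hq
    calc 3 = 3 ^ 1 := by norm_num
    _ ≤ 3 ^ t := Nat.pow_le_pow_right (by norm_num) ht
  have hqodd : Odd q := by rw [hq]; exact (by decide : Odd 3).pow
  -- Frobenius additivity
  have frobq : ∀ x y : K, (x + y) ^ q = x ^ q + y ^ q := by
    intro x y; rw [hq]; exact add_pow_char_pow x y 3 t
  have frobneg : ∀ x : K, (-x) ^ q = -x ^ q := fun x => hqodd.neg_pow x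
  -- cube identity  s^3 = s + (b^q - b)
  have hcube : s ^ 3 = s + (b ^ q - b) := by
    have h1 : s ^ 3 = ∑ i ∈ Finset.range t, b ^ 3 ^ (i + 1) := by
      rw [hs, sum_pow_char]
      exact Finset.sum_congr rfl fun i _ => by rw [← pow_mul, ← pow_succ]
    have h2 : ∑ i ∈ Finset.range (t + 1), b ^ 3 ^ i
        = (∑ i ∈ Finset.range t, b ^ 3 ^ (i + 1)) + b ^ 3 ^ 0 :=
      Finset.sum_range_succ' _ t
    have h4 : ∑ i ∈ Finset.range (t + 1), b ^ 3 ^ i = s + b ^ 3 ^ t :=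
      Finset.sum_range_succ _ t
    rw [h1, hq]
    rw [h4] at h2
    simp only [pow_zero, pow_one] at h2
    linear_combination -h2
  -- Frobenius of cube identity: (s^q)^3 = s^q + (b^{q^2} - b^q)
  have hcubeq : (s ^ q) ^ 3 = s ^ q + (b ^ q ^ 2 - b ^ q) := by
    have := congrArg (· ^ q) hcube
    rw [frobq, sub_eq_add_neg, frobq, frobneg] at this
    calc (s ^ q) ^ 3 = (s ^ 3) ^ q := by rw [← pow_mul, ← pow_mul, mul_comm]
    _ = s ^ q + ((b ^ q) ^ q + -(b ^ q)) := this
    _ = s ^ q + (b ^ q ^ 2 - b ^ q) := by rw [← pow_mul, ← pow_two]; ring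
  -- a-part
  have hab' : a ^ q + a + s ^ 2 = 0 := hab
  have haq : a ^ q = -(a + s ^ 2) := by linear_combination hab'
  have haq2 : a ^ q ^ 2 = a ↔ (s ^ q) ^ 2 = s ^ 2 := by
    have key : a ^ q ^ 2 = a + s ^ 2 - (s ^ q) ^ 2 := by
      have : a ^ q ^ 2 = (a ^ q) ^ q := by rw [← pow_mul, pow_two]
      rw [this, haq, frobneg, frobq, haq]
      have : (s ^ 2) ^ q = (s ^ q) ^ 2 := by rw [← pow_mul, mul_comm, pow_mul]
      rw [this]; ring
    constructor
    · intro h; linear_combination key - h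
    · intro h; linear_combination key - h
  -- b-part
  have hbq2 : b ^ q ^ 2 = b ↔ (s + s ^ q) ^ 3 = s + s ^ q := by
    have hadd : (s + s ^ q) ^ 3 = s ^ 3 + (s ^ q) ^ 3 := add_pow_char s (s ^ q) 3
    constructor
    · intro h; rw [hadd, hcube, hcubeq, h]; ring
    · intro h
      rw [hadd, hcube, hcubeq] at h
      linear_combination h
  -- translate RHS
  have hqsub : 2 * ((q - 1) / 2) = q - 1 :=
    Nat.mul_div_cancel' (Nat.Odd.sub_odd hqodd odd_one).two_dvd
  have hβpow : β ^ ((q - 1) / 2) = s ^ (q - 1) := by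
    rw [hβ, ← pow_mul, hqsub]
  have hβ0 : β = 0 ↔ s = 0 := by rw [hβ]; exact sq_eq_zero_iff
  have hβ1 : β = 1 ↔ s ^ 2 = 1 := by rw [hβ]
  rw [haq2, hbq2, hβ0, hβ1, hβpow]
  constructor
  · rintro ⟨h1, h2⟩
    have hfac : (s ^ q - s) * (s ^ q + s) = 0 := by linear_combination h1
    rcases mul_eq_zero.mp hfac with hm | hp
    · -- s^q = s
      have hsq : s ^ q = s := by linear_combination hm
      rw [hsq] at h2
      have hs3 : s ^ 3 = s := by linear_combination -h2 + (3 * s ^ 3 - s) * h3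
      have : s * (s ^ 2 - 1) = 0 := by linear_combination hs3
      rcases mul_eq_zero.mp this with h | h
      · exact Or.inl h
      · exact Or.inr (Or.inl (by linear_combination h))
    · -- s^q = -s
      by_cases hs0 : s = 0
      · exact Or.inl hs0
      · refine Or.inr (Or.inr ?_)
        have hsq : s ^ q = -s := by linear_combination hp
        have hq1 : q - 1 + 1 = q := Nat.succ_pred_eq_of_pos (lt_of_lt_of_le (by norm_num) hq3)
        have : s ^ (q - 1) * s = (-1) * s := by
          rw [← pow_succ, hq1, hsq]; ring
        have := mul_right_cancel₀ hs0 this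
        exact this
  · rintro (h | h | h)
    · -- s = 0
      have hz : (0 : K) ^ q = 0 := zero_pow (by positivity : q ≠ 0)
      rw [h, hz]
      constructor <;> simp
    · -- s^2 = 1
      have hs3 : s ^ 3 = s := by linear_combination s * h
      have aux : ∀ k, s ^ 3 ^ k = s := by
        intro k
        induction k with
        | zero => simp
        | succ n ih => rw [pow_succ, pow_mul, ih, hs3]
      have hsq : s ^ q = s := by rw [hq]; exact aux t
      rw [hsq]
      exact ⟨rfl, by linear_combination 8 * hs3 + 2 * s * h3⟩
    · -- s^{q-1} = -1
      have hs0 : s ≠ 0 := by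
        intro h0
        rw [h0, zero_pow (Nat.sub_ne_zero_of_lt (lt_of_lt_of_le (by norm_num) hq3))] at h
        exact one_ne_zero (neg_eq_zero.mp h.symm)
      have hq1 : q - 1 + 1 = q := Nat.succ_pred_eq_of_pos (lt_of_lt_of_le (by norm_num) hq3)
      have hsq : s ^ q = -s := by
        rw [← hq1, pow_succ, h]; ring
      rw [hsq]
      exact ⟨by ring, by ring⟩
end

section
/- Let t ≥ 1 be an integer and q = 3^t. Let R be a commutative ring of characteristic 3 and let u, v ∈ R satisfy u^q + u = v^{q+1}. Set x = −(u + v²) and y = v³ − v. Then x^q + x + (y + y³ + y⁹ + ⋯ + y^{3^{t−1}})² = 0. -/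
/-- If `u^q + u = v^{q+1}` (the Hermitian equation, `q = 3^t`) in a commutative
ring of characteristic 3, then `x = -(u+v²)` and `y = v³ - v` satisfy the
defining equation `x^q + x + p(y)² = 0` of `Z₃`, where `p(Y) = Σ_{i<t} Y^{3^i}`. -/
theorem stmt_17 {R : Type*} [CommRing R] [CharP R 3]
    (t : ℕ) (ht : 1 ≤ t) (q : ℕ) (hq : q = 3 ^ t)
    (u v : R) (huv : u ^ q + u = v ^ (q + 1))
    (x y : R) (hx : x = -(u + v ^ 2)) (hy : y = v ^ 3 - v) :
    x ^ q + x + (∑ i ∈ Finset.range t, y ^ 3 ^ i) ^ 2 = 0 := by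
  have h3 : (3 : R) = 0 := by exact_mod_cast CharP.cast_eq_zero R 3
  have hsum : ∑ i ∈ Finset.range t, y ^ 3 ^ i = v ^ q - v := by
    have key : ∀ i, y ^ 3 ^ i = v ^ 3 ^ (i + 1) - v ^ 3 ^ i := by
      intro i
      rw [hy, sub_pow_char_pow, ← pow_mul, pow_succ, Nat.mul_comm]
    simp_rw [key]
    rw [Finset.sum_range_sub (fun i => v ^ 3 ^ i), hq]
    simp
  have hqodd : Odd q := by rw [hq]; exact Odd.pow ⟨1, rfl⟩
  have hxq : x ^ q = -(u ^ q + (v ^ 2) ^ q) := by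
    rw [hx, hqodd.neg_pow, hq, add_pow_char_pow]
  have h2q : (v ^ 2) ^ q = (v ^ q) ^ 2 := by rw [← pow_mul, Nat.mul_comm, pow_mul]
  have hq1 : v ^ (q + 1) = v ^ q * v := by rw [pow_succ]
  rw [hxq, h2q, hsum, hx]
  rw [hq1] at huv
  linear_combination -huv - v ^ q * v * h3
end
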